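/- arXiv:math/0507349 — 15 statements merged into one kernel-verified Lean document; each statement's English description precedes it below -/
import Mathlib

section
/- (Saavedra) If a triple (I, λ, ρ) on a strict semi-monoidal category satisfies λ_I = ρ_I, λ_{X⊗Y} = λ_X ⊗ id_Y, and ρ_{X⊗Y} = id_X ⊗ ρ_Y, then it satisfies the Kelly axiom id_X ⊗ λ_Y = ρ_X ⊗ id_Y for all X, Y. -/
open CategoryTheory

universe v u v' u'

/-- A strict semi-monoidal category: a category with an associative tensor product
(associativity strict on objects, expressed with `eqToHom` on morphisms). -/
structure SemiMonoidal (C : Type u) [Category.{v} C] where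
  t : C → C → C
  h : {X₁ X₂ Y₁ Y₂ : C} → (X₁ ⟶ X₂) → (Y₁ ⟶ Y₂) → (t X₁ Y₁ ⟶ t X₂ Y₂)
  h_id : ∀ X Y : C, h (𝟙 X) (𝟙 Y) = 𝟙 (t X Y)
  h_comp : ∀ {X₁ X₂ X₃ Y₁ Y₂ Y₃ : C} (f₁ : X₁ ⟶ X₂) (f₂ : X₂ ⟶ X₃)
      (g₁ : Y₁ ⟶ Y₂) (g₂ : Y₂ ⟶ Y₃),
      h (f₁ ≫ f₂) (g₁ ≫ g₂) = h f₁ g₁ ≫ h f₂ g₂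
  assoc : ∀ X Y Z : C, t (t X Y) Z = t X (t Y Z)
  h_assoc : ∀ {X₁ X₂ Y₁ Y₂ Z₁ Z₂ : C} (f : X₁ ⟶ X₂) (g : Y₁ ⟶ Y₂) (k : Z₁ ⟶ Z₂),
      h (h f g) k =
        eqToHom (assoc X₁ Y₁ Z₁) ≫ h f (h g k) ≫ eqToHom (assoc X₂ Y₂ Z₂).symm

variable {C : Type u} [Category.{v} C]

theorem SemiMonoidal.h_eqToHom_comp_left (M : SemiMonoidal C) {X₁ X₂ X₃ Y₁ Y₂ : C}
    (p : X₁ = X₂) (f : X₂ ⟶ X₃) (g : Y₁ ⟶ Y₂) :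
    M.h (eqToHom p ≫ f) g = eqToHom (by rw [p]) ≫ M.h f g := by
  subst p; simp

theorem SemiMonoidal.h_eqToHom_comp_right (M : SemiMonoidal C) {X₁ X₂ Y₁ Y₂ Y₃ : C}
    (f : X₁ ⟶ X₂) (q : Y₁ = Y₂) (g : Y₂ ⟶ Y₃) :
    M.h f (eqToHom q ≫ g) = eqToHom (by rw [q]) ≫ M.h f g := by
  subst q; simp

/-- Saavedra's converse to Kelly's lemma: axioms (1), (2), (3) imply the Kelly axiom (4). -/
theorem stmt3 (M : SemiMonoidal C) (I : C)
    (lam : ∀ X : C, M.t I X ⟶ X) (rho : ∀ X : C, M.t X I ⟶ X)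
    (lam_iso : ∀ X : C, IsIso (lam X)) (rho_iso : ∀ X : C, IsIso (rho X))
    (lam_nat : ∀ {X Y : C} (f : X ⟶ Y), M.h (𝟙 I) f ≫ lam Y = lam X ≫ f)
    (rho_nat : ∀ {X Y : C} (f : X ⟶ Y), M.h f (𝟙 I) ≫ rho Y = rho X ≫ f)
    (ax1 : lam I = rho I)
    (ax2 : ∀ X Y : C, M.h (lam X) (𝟙 Y) = eqToHom (M.assoc I X Y) ≫ lam (M.t X Y))
    (ax3 : ∀ X Y : C, M.h (𝟙 X) (rho Y) = eqToHom (M.assoc X Y I).symm ≫ rho (M.t X Y)) :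
    ∀ X Y : C,
      M.h (𝟙 X) (lam Y) = eqToHom (M.assoc X I Y).symm ≫ M.h (rho X) (𝟙 Y) := by
  intro X Y
  -- λ cancellation: 𝟙_I ⊗ λ_Y = λ_{I⊗Y}
  have hIY : M.h (𝟙 I) (lam Y) = lam (M.t I Y) := by
    haveI := lam_iso Y
    exact (cancel_mono (lam Y)).1 (lam_nat (lam Y))
  -- ρ cancellation: ρ_X ⊗ 𝟙_I = ρ_{X⊗I}
  have hXI : M.h (rho X) (𝟙 I) = rho (M.t X I) := by
    haveI := rho_iso X
    exact (cancel_mono (rho X)).1 (rho_nat (rho X))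
  -- ρ_{X⊗I} via (3) and (1)
  have rXI : rho (M.t X I) = eqToHom (M.assoc X I I) ≫ M.h (𝟙 X) (lam I) := by
    rw [ax1, ax3]; simp
  -- the key invertible morphism A = 𝟙_X ⊗ λ_{I⊗Y}
  set A := M.h (𝟙 X) (lam (M.t I Y)) with hA
  haveI : IsIso A := by
    haveI := lam_iso (M.t I Y)
    refine ⟨M.h (𝟙 X) (inv (lam (M.t I Y))), ?_, ?_⟩ <;>
      rw [hA, ← M.h_comp] <;> simp [M.h_id]
  have P : M.t (M.t X I) (M.t I Y) = M.t X (M.t I (M.t I Y)) := by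
    rw [M.assoc X I (M.t I Y)]
  -- path 1
  have path1 : M.h (rho X) (lam Y)
      = eqToHom P ≫ A ≫ M.h (𝟙 X) (lam Y) := by
    have e1 : M.h (rho X) (lam Y)
        = M.h (rho X) (𝟙 (M.t I Y)) ≫ M.h (𝟙 X) (lam Y) := by
      rw [← M.h_comp]; simp
    have a0 := M.h_assoc (rho X) (𝟙 I) (𝟙 Y)
    rw [hXI, M.h_id] at a0
    have a1 : M.h (rho X) (𝟙 (M.t I Y))
        = eqToHom (M.assoc (M.t X I) I Y).symm ≫ M.h (rho (M.t X I)) (𝟙 Y)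
            ≫ eqToHom (M.assoc X I Y) := by
      rw [a0]; simp
    have a2 : M.h (rho (M.t X I)) (𝟙 Y)
        = eqToHom (show M.t (M.t (M.t X I) I) Y = M.t (M.t X (M.t I I)) Y by
            rw [M.assoc X I I])
          ≫ M.h (M.h (𝟙 X) (lam I)) (𝟙 Y) := by
      rw [rXI, M.h_eqToHom_comp_left]
    have a3 : M.h (M.h (𝟙 X) (lam I)) (𝟙 Y)
        = eqToHom (M.assoc X (M.t I I) Y) ≫ M.h (𝟙 X) (M.h (lam I) (𝟙 Y))
            ≫ eqToHom (M.assoc X I Y).symm := M.h_assoc _ _ _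
    have a4 : M.h (𝟙 X) (M.h (lam I) (𝟙 Y))
        = eqToHom (show M.t X (M.t (M.t I I) Y) = M.t X (M.t I (M.t I Y)) by
            rw [M.assoc I I Y]) ≫ A := by
      rw [ax2, M.h_eqToHom_comp_right, hA]
    rw [e1, a1, a2, a3, a4]
    simp
  -- path 2
  have path2 : M.h (rho X) (lam Y)
      = eqToHom P ≫ A
          ≫ eqToHom (M.assoc X I Y).symm ≫ M.h (rho X) (𝟙 Y) := by
    have e2 : M.h (rho X) (lam Y)
        = M.h (𝟙 (M.t X I)) (lam Y) ≫ M.h (rho X) (𝟙 Y) := by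
      rw [← M.h_comp]; simp
    have b0 := M.h_assoc (𝟙 X) (𝟙 I) (lam Y)
    rw [M.h_id, hIY] at b0
    rw [e2, b0, hA]
    simp
  rw [path2] at path1
  have h1 := (cancel_epi (eqToHom P)).1 path1.symm
  exact (cancel_epi A).1 h1
end

section
/- Given two LR units (I, λ, ρ) and (I', λ', ρ') on the same strict semi-monoidal category, the map ψ : I → I' defined as the composite λ_{I'} ∘ (ρ'_I)^{-1} : I → I⊗I' → I' is compatible with the left constraints, i.e., λ'_X ∘ (ψ ⊗ id_X) = λ_X for all X. -/
open CategoryTheory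

universe v u v' u'

variable {C : Type u} [Category.{v} C]

/-- An LR unit structure on `I`: natural isomorphisms `λ_X : I⊗X ≅ X`, `ρ_X : X⊗I ≅ X`
satisfying the four classical unit axioms. -/
structure IsLRUnit (M : SemiMonoidal C) (I : C)
    (lam : ∀ X : C, M.t I X ⟶ X) (rho : ∀ X : C, M.t X I ⟶ X) : Prop where
  lam_iso : ∀ X : C, IsIso (lam X)
  rho_iso : ∀ X : C, IsIso (rho X)
  lam_nat : ∀ {X Y : C} (f : X ⟶ Y), M.h (𝟙 I) f ≫ lam Y = lam X ≫ f
  rho_nat : ∀ {X Y : C} (f : X ⟶ Y), M.h f (𝟙 I) ≫ rho Y = rho X ≫ f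
  ax1 : lam I = rho I
  ax2 : ∀ X Y : C, M.h (lam X) (𝟙 Y) = eqToHom (M.assoc I X Y) ≫ lam (M.t X Y)
  ax3 : ∀ X Y : C, M.h (𝟙 X) (rho Y) = eqToHom (M.assoc X Y I).symm ≫ rho (M.t X Y)
  ax4 : ∀ X Y : C, M.h (𝟙 X) (lam Y) = eqToHom (M.assoc X I Y).symm ≫ M.h (rho X) (𝟙 Y)

/-- The canonical comparison map `ψ = λ_{I'} ∘ (ρ'_I)⁻¹` between two LR units
is compatible with the left constraints: `λ'_X ∘ (ψ ⊗ id_X) = λ_X`. -/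
theorem stmt4 (M : SemiMonoidal C) (I I' : C)
    (lam : ∀ X : C, M.t I X ⟶ X) (rho : ∀ X : C, M.t X I ⟶ X)
    (lam' : ∀ X : C, M.t I' X ⟶ X) (rho' : ∀ X : C, M.t X I' ⟶ X)
    (hU : IsLRUnit M I lam rho) (hU' : IsLRUnit M I' lam' rho')
    (ψ : I ⟶ I') (hψ : rho' I ≫ ψ = lam I') :
    ∀ X : C, M.h ψ (𝟙 X) ≫ lam' X = lam X := by
  intro X
  have hiso := hU'.rho_iso I
  have hinv : IsIso (M.h (rho' I) (𝟙 X)) := by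
    refine ⟨M.h (inv (rho' I)) (𝟙 X), ?_, ?_⟩ <;>
      rw [← M.h_comp] <;> simp [M.h_id]
  rw [← cancel_epi (M.h (rho' I) (𝟙 X)), ← Category.assoc, ← M.h_comp, hψ,
    Category.comp_id, hU.ax2, Category.assoc, ← hU.lam_nat (lam' X),
    hU'.ax4 I X]
  simp
end

section
/- Between any two LR units (I, λ, ρ) and (I', λ', ρ') on a strict semi-monoidal category there is exactly one morphism of LR units, i.e., exactly one arrow ψ : I → I' such that λ'_X ∘ (ψ ⊗ id_X) = λ_X and ρ'_X ∘ (id_X ⊗ ψ) = ρ_X for all X. Hence the category of LR units is contractible if nonempty. -/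
open CategoryTheory

universe v u v' u'

variable {C : Type u} [Category.{v} C]

/-- Between any two LR units there is exactly one morphism of LR units;
hence the category of LR units is contractible if nonempty. -/
theorem stmt5 (M : SemiMonoidal C) (I I' : C)
    (lam : ∀ X : C, M.t I X ⟶ X) (rho : ∀ X : C, M.t X I ⟶ X)
    (lam' : ∀ X : C, M.t I' X ⟶ X) (rho' : ∀ X : C, M.t X I' ⟶ X)
    (hU : IsLRUnit M I lam rho) (hU' : IsLRUnit M I' lam' rho') :
    ∃! ψ : I ⟶ I',
      (∀ X : C, M.h ψ (𝟙 X) ≫ lam' X = lam X) ∧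
      (∀ X : C, M.h (𝟙 X) ψ ≫ rho' X = rho X) := by
  haveI := hU'.rho_iso I
  haveI := hU.lam_iso I
  refine ⟨inv (rho' I) ≫ lam I', ⟨?_, ?_⟩, ?_⟩
  · intro X
    have h1 : M.h (inv (rho' I) ≫ lam I') (𝟙 X) =
        M.h (inv (rho' I)) (𝟙 X) ≫ M.h (lam I') (𝟙 X) := by
      rw [← M.h_comp]; simp
    rw [h1, hU.ax2, Category.assoc, Category.assoc,
      show lam (M.t I' X) ≫ lam' X = M.h (𝟙 I) (lam' X) ≫ lam X from
        (hU.lam_nat (lam' X)).symm,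
      hU'.ax4 I X]
    slice_lhs 2 3 => rw [eqToHom_trans, eqToHom_refl]
    rw [Category.id_comp, ← Category.assoc, ← M.h_comp]
    simp [M.h_id]
  · intro X
    have h1 : M.h (𝟙 X) (inv (rho' I) ≫ lam I') =
        M.h (𝟙 X) (inv (rho' I)) ≫ M.h (𝟙 X) (lam I') := by
      rw [← M.h_comp]; simp
    have key : M.h (𝟙 X) (inv (rho' I)) ≫ eqToHom (M.assoc X I I').symm ≫
        rho' (M.t X I) = 𝟙 (M.t X I) := by
      rw [← hU'.ax3 X I, ← M.h_comp]; simp [M.h_id]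
    rw [h1, hU.ax4 X I', Category.assoc, Category.assoc, hU'.rho_nat (rho X)]
    slice_lhs 1 3 => rw [key]
    simp
  · rintro ψ ⟨-, h2⟩
    haveI := hU.rho_iso I
    have e1 : M.h (𝟙 I) ψ = rho I ≫ inv (rho' I) := by
      rw [← h2 I]; simp
    have e2 := hU.lam_nat ψ
    rw [e1, hU.ax1] at e2
    rw [← cancel_epi (rho I), ← e2]
    simp
end

section
/- The tensor product of two LR units (I, λ, ρ) and (I', λ', ρ'), given by the object I⊗I' with left constraint λ_X ∘ (id_I ⊗ λ'_X) and right constraint ρ'_X ∘ (ρ_X ⊗ id_{I'}), is again an LR unit; in particular it satisfies the Kelly axiom. -/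
open CategoryTheory

universe v u v' u'

variable {C : Type u} [Category.{v} C]

namespace SemiMonoidal
variable {C : Type u} [Category.{v} C] (M : SemiMonoidal C)


@[simp] lemma h_eq {X₁ X₂ Y₁ Y₂ : C} (p : X₁ = X₂) (q : Y₁ = Y₂) :
    M.h (eqToHom p) (eqToHom q) = eqToHom (by rw [p, q]) := by
  subst p; subst q; simp [M.h_id]

@[simp] lemma h_eql {X₁ X₂ Y : C} (p : X₁ = X₂) :
    M.h (eqToHom p) (𝟙 Y) = eqToHom (by rw [p]) := by
  subst p; simp [M.h_id]

@[simp] lemma h_eqr {X Y₁ Y₂ : C} (q : Y₁ = Y₂) :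
    M.h (𝟙 X) (eqToHom q) = eqToHom (by rw [q]) := by
  subst q; simp [M.h_id]

@[simp] lemma h_pull_ll {X₁ X₂ X₃ Y₁ Y₂ : C} (p : X₁ = X₂) (f : X₂ ⟶ X₃) (g : Y₁ ⟶ Y₂) :
    M.h (eqToHom p ≫ f) g = eqToHom (by rw [p]) ≫ M.h f g := by
  subst p; simp

@[simp] lemma h_pull_lr {X₁ X₂ X₃ Y₁ Y₂ : C} (f : X₁ ⟶ X₂) (p : X₂ = X₃) (g : Y₁ ⟶ Y₂) :
    M.h (f ≫ eqToHom p) g = M.h f g ≫ eqToHom (by rw [p]) := by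
  subst p; simp

@[simp] lemma h_pull_rl {X₁ X₂ Y₁ Y₂ Y₃ : C} (f : X₁ ⟶ X₂) (p : Y₁ = Y₂) (g : Y₂ ⟶ Y₃) :
    M.h f (eqToHom p ≫ g) = eqToHom (by rw [p]) ≫ M.h f g := by
  subst p; simp

@[simp] lemma h_pull_rr {X₁ X₂ Y₁ Y₂ Y₃ : C} (f : X₁ ⟶ X₂) (g : Y₁ ⟶ Y₂) (p : Y₂ = Y₃) :
    M.h f (g ≫ eqToHom p) = M.h f g ≫ eqToHom (by rw [p]) := by
  subst p; simp

lemma h_el {X₁ X₂ Y₁ Y₂ : C} (p : X₁ = X₂) (g : Y₁ ⟶ Y₂) :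
    M.h (eqToHom p) g = eqToHom (by rw [p]) ≫ M.h (𝟙 X₂) g := by
  subst p; simp

lemma h_er {X₁ X₂ Y₁ Y₂ : C} (f : X₁ ⟶ X₂) (p : Y₁ = Y₂) :
    M.h f (eqToHom p) = eqToHom (by rw [p]) ≫ M.h f (𝟙 Y₂) := by
  subst p; simp

lemma hl_comp {X₁ X₂ X₃ Y : C} (f : X₁ ⟶ X₂) (g : X₂ ⟶ X₃) :
    M.h (f ≫ g) (𝟙 Y) = M.h f (𝟙 Y) ≫ M.h g (𝟙 Y) := by
  rw [← M.h_comp]; simp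

lemma hr_comp {X Y₁ Y₂ Y₃ : C} (f : Y₁ ⟶ Y₂) (g : Y₂ ⟶ Y₃) :
    M.h (𝟙 X) (f ≫ g) = M.h (𝟙 X) f ≫ M.h (𝟙 X) g := by
  rw [← M.h_comp]; simp

lemma h_split {X₁ X₂ Y₁ Y₂ : C} (f : X₁ ⟶ X₂) (g : Y₁ ⟶ Y₂) :
    M.h f g = M.h f (𝟙 Y₁) ≫ M.h (𝟙 X₂) g := by
  rw [← M.h_comp]; simp

lemma h_split' {X₁ X₂ Y₁ Y₂ : C} (f : X₁ ⟶ X₂) (g : Y₁ ⟶ Y₂) :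
    M.h f g = M.h (𝟙 X₁) g ≫ M.h f (𝟙 Y₂) := by
  rw [← M.h_comp]; simp

lemma h_exch {X₁ X₂ Y₁ Y₂ : C} (f : X₁ ⟶ X₂) (g : Y₁ ⟶ Y₂) :
    M.h f (𝟙 Y₁) ≫ M.h (𝟙 X₂) g = M.h (𝟙 X₁) g ≫ M.h f (𝟙 Y₂) := by
  rw [← M.h_split, ← M.h_split']

lemma h_assoc' {X₁ X₂ Y₁ Y₂ Z₁ Z₂ : C} (f : X₁ ⟶ X₂) (g : Y₁ ⟶ Y₂) (k : Z₁ ⟶ Z₂) :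
    M.h f (M.h g k) =
      eqToHom (M.assoc X₁ Y₁ Z₁).symm ≫ M.h (M.h f g) k ≫ eqToHom (M.assoc X₂ Y₂ Z₂) := by
  rw [M.h_assoc]; simp

end SemiMonoidal

/-- The tensor product of two LR units, with left constraint `λ_X ∘ (id_I ⊗ λ'_X)`
and right constraint `ρ'_X ∘ (ρ_X ⊗ id_{I'})`, is again an LR unit
(in particular it satisfies the Kelly axiom). -/
theorem stmt6 (M : SemiMonoidal C) (I I' : C)
    (lam : ∀ X : C, M.t I X ⟶ X) (rho : ∀ X : C, M.t X I ⟶ X)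
    (lam' : ∀ X : C, M.t I' X ⟶ X) (rho' : ∀ X : C, M.t X I' ⟶ X)
    (hU : IsLRUnit M I lam rho) (hU' : IsLRUnit M I' lam' rho') :
    IsLRUnit M (M.t I I')
      (fun X => eqToHom (M.assoc I I' X) ≫ M.h (𝟙 I) (lam' X) ≫ lam X)
      (fun X => eqToHom (M.assoc X I I').symm ≫ M.h (rho X) (𝟙 I') ≫ rho' X) := by
  refine ⟨?_, ?_, ?_, ?_, ?_, ?_, ?_, ?_⟩
  · -- lam_iso
    intro X
    have := hU'.lam_iso X
    have := hU.lam_iso X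
    have i1 : IsIso (M.h (𝟙 I) (lam' X)) :=
      ⟨M.h (𝟙 I) (inv (lam' X)), by rw [← M.h_comp]; simp [M.h_id],
        by rw [← M.h_comp]; simp [M.h_id]⟩
    infer_instance
  · -- rho_iso
    intro X
    have := hU'.rho_iso X
    have := hU.rho_iso X
    have i1 : IsIso (M.h (rho X) (𝟙 I')) :=
      ⟨M.h (inv (rho X)) (𝟙 I'), by rw [← M.h_comp]; simp [M.h_id],
        by rw [← M.h_comp]; simp [M.h_id]⟩
    infer_instance
  · -- lam_nat
    intro X Y f
    have h1 : M.h (𝟙 (M.t I I')) f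
        = eqToHom (M.assoc I I' X) ≫ M.h (𝟙 I) (M.h (𝟙 I') f) ≫ eqToHom (M.assoc I I' Y).symm := by
      rw [← M.h_id I I', M.h_assoc]
    rw [h1]
    simp only [Category.assoc, eqToHom_trans, eqToHom_trans_assoc, eqToHom_refl,
      Category.id_comp, Category.comp_id]
    rw [← Category.assoc (M.h (𝟙 I) (M.h (𝟙 I') f)), ← M.hr_comp, hU'.lam_nat f,
      M.hr_comp]
    simp only [Category.assoc]
    rw [hU.lam_nat f]
  · -- rho_nat
    intro X Y f
    have h1 : M.h f (𝟙 (M.t I I'))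
        = eqToHom (M.assoc X I I').symm ≫ M.h (M.h f (𝟙 I)) (𝟙 I') ≫ eqToHom (M.assoc Y I I') := by
      rw [← M.h_id I I', M.h_assoc']
    rw [h1]
    simp only [Category.assoc, eqToHom_trans, eqToHom_trans_assoc, eqToHom_refl,
      Category.id_comp, Category.comp_id]
    rw [← Category.assoc (M.h (M.h f (𝟙 I)) (𝟙 I')), ← M.hl_comp, hU.rho_nat f,
      M.hl_comp]
    simp only [Category.assoc]
    rw [hU'.rho_nat f]
  · -- ax1
    have key : M.h (rho' I) (𝟙 I') = rho' (M.t I I') := by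
      have k1 := hU'.ax4 I I'
      rw [hU'.ax1, hU'.ax3] at k1
      exact (cancel_epi (eqToHom (M.assoc I I' I').symm)).mp k1.symm
    rw [hU'.ax4 I (M.t I I')]
    simp only [Category.assoc, eqToHom_trans, eqToHom_trans_assoc, eqToHom_refl,
      Category.id_comp]
    have hlamJ : lam (M.t I I') = eqToHom (M.assoc I I I').symm ≫ M.h (rho I) (𝟙 I') := by
      rw [← hU.ax1, hU.ax2]; simp
    rw [hlamJ]
    rw [show (𝟙 (M.t I I')) = M.h (𝟙 I) (𝟙 I') from (M.h_id I I').symm, M.h_assoc']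
    simp only [Category.assoc, eqToHom_trans, eqToHom_trans_assoc, eqToHom_refl,
      Category.id_comp, Category.comp_id]
    rw [← M.hl_comp, hU.rho_nat (rho' I), M.hl_comp, key]
  · -- ax2
    intro X Y
    simp only [M.h_pull_ll, M.hl_comp, Category.assoc]
    rw [M.h_assoc, hU'.ax2, hU.ax2]
    simp only [M.h_pull_rl, Category.assoc, eqToHom_trans, eqToHom_trans_assoc, eqToHom_refl,
      Category.id_comp, Category.comp_id]
  · -- ax3
    intro X Y
    simp only [M.h_pull_rl, M.hr_comp, Category.assoc]
    rw [M.h_assoc', hU.ax3, hU'.ax3]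
    simp only [M.h_pull_ll, Category.assoc, eqToHom_trans, eqToHom_trans_assoc, eqToHom_refl,
      Category.id_comp, Category.comp_id]
  · -- ax4
    intro X Y
    simp only [M.h_pull_rl, M.hr_comp, M.h_pull_ll, M.hl_comp, Category.assoc]
    rw [M.h_assoc' (𝟙 X) (𝟙 I) (lam' Y), M.h_id, hU'.ax4, hU.ax4]
    rw [M.h_assoc (rho X) (𝟙 I') (𝟙 Y), M.h_id]
    simp only [M.h_pull_ll, M.h_pull_rl, Category.assoc, eqToHom_trans, eqToHom_trans_assoc,
      eqToHom_refl, Category.id_comp, Category.comp_id]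
    rw [← M.hl_comp, ← hU'.rho_nat (rho X), M.hl_comp]
    rw [M.h_assoc (rho X) (𝟙 I') (𝟙 Y), M.h_id]
    simp only [Category.assoc, eqToHom_trans, eqToHom_trans_assoc, eqToHom_refl,
      Category.id_comp, Category.comp_id]
end

section
/- Given a Saavedra unit (I, α) in a strict semi-monoidal category, for each object X there exists a unique arrow λ_X : I⊗X → X with id_I ⊗ λ_X = α ⊗ id_X, and a unique arrow ρ_X : X⊗I → X with ρ_X ⊗ id_I = id_X ⊗ α; moreover λ_X and ρ_X are isomorphisms and natural in X. -/
open CategoryTheory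

universe v u v' u'

variable {C : Type u} [Category.{v} C]

/-- Given a Saavedra unit `(I, α)`, for each `X` there are unique arrows
`λ_X : I⊗X → X` with `id_I ⊗ λ_X = α ⊗ id_X` and `ρ_X : X⊗I → X` with
`ρ_X ⊗ id_I = id_X ⊗ α`; they are isomorphisms and natural in `X`. -/
theorem stmt7 (M : SemiMonoidal C) (I : C) (α : M.t I I ⟶ I) (hα : IsIso α)
    (ffL : ∀ X Y : C, Function.Bijective fun f : X ⟶ Y => M.h (𝟙 I) f)
    (ffR : ∀ X Y : C, Function.Bijective fun f : X ⟶ Y => M.h f (𝟙 I)) :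
    ∃ (lam : ∀ X : C, M.t I X ⟶ X) (rho : ∀ X : C, M.t X I ⟶ X),
      (∀ X : C, M.h (𝟙 I) (lam X) = eqToHom (M.assoc I I X).symm ≫ M.h α (𝟙 X)) ∧
      (∀ X : C, M.h (rho X) (𝟙 I) = eqToHom (M.assoc X I I) ≫ M.h (𝟙 X) α) ∧
      (∀ (X : C) (l : M.t I X ⟶ X),
        M.h (𝟙 I) l = eqToHom (M.assoc I I X).symm ≫ M.h α (𝟙 X) → l = lam X) ∧
      (∀ (X : C) (r : M.t X I ⟶ X),
        M.h r (𝟙 I) = eqToHom (M.assoc X I I) ≫ M.h (𝟙 X) α → r = rho X) ∧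
      (∀ X : C, IsIso (lam X)) ∧ (∀ X : C, IsIso (rho X)) ∧
      (∀ {X Y : C} (f : X ⟶ Y), M.h (𝟙 I) f ≫ lam Y = lam X ≫ f) ∧
      (∀ {X Y : C} (f : X ⟶ Y), M.h f (𝟙 I) ≫ rho Y = rho X ≫ f) := by

  haveI := hα
  choose lam hlam0 using fun X : C =>
    (ffL (M.t I X) X).2 (eqToHom (M.assoc I I X).symm ≫ M.h α (𝟙 X))
  choose rho hrho0 using fun X : C =>
    (ffR (M.t X I) X).2 (eqToHom (M.assoc X I I) ≫ M.h (𝟙 X) α)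
  have hlam : ∀ X : C, M.h (𝟙 I) (lam X) = eqToHom (M.assoc I I X).symm ≫ M.h α (𝟙 X) := hlam0
  have hrho : ∀ X : C, M.h (rho X) (𝟙 I) = eqToHom (M.assoc X I I) ≫ M.h (𝟙 X) α := hrho0
  have hsplitL : ∀ {Y₁ Y₂ Y₃ : C} (g₁ : Y₁ ⟶ Y₂) (g₂ : Y₂ ⟶ Y₃),
      M.h (𝟙 I) (g₁ ≫ g₂) = M.h (𝟙 I) g₁ ≫ M.h (𝟙 I) g₂ := by
    intros; rw [← M.h_comp, Category.comp_id]
  have hsplitR : ∀ {Y₁ Y₂ Y₃ : C} (g₁ : Y₁ ⟶ Y₂) (g₂ : Y₂ ⟶ Y₃),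
      M.h (g₁ ≫ g₂) (𝟙 I) = M.h g₁ (𝟙 I) ≫ M.h g₂ (𝟙 I) := by
    intros; rw [← M.h_comp, Category.comp_id]
  have hisoL : ∀ X : C, IsIso (M.h α (𝟙 X)) := fun X =>
    ⟨M.h (inv α) (𝟙 X), by
      constructor <;> rw [← M.h_comp] <;> simp [M.h_id]⟩
  have hisoR : ∀ X : C, IsIso (M.h (𝟙 X) α) := fun X =>
    ⟨M.h (𝟙 X) (inv α), by
      constructor <;> rw [← M.h_comp] <;> simp [M.h_id]⟩
  refine ⟨lam, rho, hlam, hrho,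
    fun X l hl => (ffL _ _).1 (hl.trans (hlam X).symm),
    fun X r hr => (ffR _ _).1 (hr.trans (hrho X).symm), ?_, ?_, ?_, ?_⟩
  · intro X
    have h2 : IsIso (M.h (𝟙 I) (lam X)) := by
      rw [hlam X]; exact @IsIso.comp_isIso _ _ _ _ _ _ _ _ (hisoL X)
    obtain ⟨g, hg⟩ := (ffL X (M.t I X)).2 (inv (M.h (𝟙 I) (lam X)))
    have hg : M.h (𝟙 I) g = inv (M.h (𝟙 I) (lam X)) := hg
    refine ⟨g, (ffL _ _).1 ?_, (ffL _ _).1 ?_⟩ <;> simp only <;>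
      rw [hsplitL, hg] <;> simp [M.h_id]
  · intro X
    have h2 : IsIso (M.h (rho X) (𝟙 I)) := by
      rw [hrho X]; exact @IsIso.comp_isIso _ _ _ _ _ _ _ _ (hisoR X)
    obtain ⟨g, hg⟩ := (ffR X (M.t X I)).2 (inv (M.h (rho X) (𝟙 I)))
    have hg : M.h g (𝟙 I) = inv (M.h (rho X) (𝟙 I)) := hg
    refine ⟨g, (ffR _ _).1 ?_, (ffR _ _).1 ?_⟩ <;> simp only <;>
      rw [hsplitR, hg] <;> simp [M.h_id]
  · intro X Y f
    apply (ffL _ _).1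
    simp only
    rw [hsplitL, hsplitL, hlam X, hlam Y]
    have hIf : M.h (𝟙 I) (M.h (𝟙 I) f) =
        eqToHom (M.assoc I I X).symm ≫ M.h (𝟙 (M.t I I)) f ≫ eqToHom (M.assoc I I Y) := by
      rw [← M.h_id I I, M.h_assoc]
      simp
    rw [hIf]
    simp only [Category.assoc, eqToHom_trans, eqToHom_trans_assoc, eqToHom_refl,
      Category.comp_id, Category.id_comp]
    congr 1
    rw [← M.h_comp, ← M.h_comp]
    simp
  · intro X Y f
    apply (ffR _ _).1
    simp only
    rw [hsplitR, hsplitR, hrho X, hrho Y]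
    have hIf : M.h (M.h f (𝟙 I)) (𝟙 I) =
        eqToHom (M.assoc X I I) ≫ M.h f (𝟙 (M.t I I)) ≫ eqToHom (M.assoc Y I I).symm := by
      rw [M.h_assoc, M.h_id]
    rw [hIf]
    simp only [Category.assoc, eqToHom_trans, eqToHom_trans_assoc, eqToHom_refl,
      Category.comp_id, Category.id_comp]
    congr 1
    rw [← M.h_comp, ← M.h_comp]
    simp
end

section
/- The left and right constraints λ, ρ constructed from a Saavedra unit (I, α) (characterized by id_I ⊗ λ_X = α ⊗ id_X and ρ_X ⊗ id_I = id_X ⊗ α) satisfy the Kelly axiom ρ_X ⊗ id_Y = id_X ⊗ λ_Y for all objects X, Y. -/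
open CategoryTheory

universe v u v' u'

variable {C : Type u} [Category.{v} C]

lemma hEqL (M : SemiMonoidal C) {X₁ X₂ Y : C} (p : X₁ = X₂) :
    M.h (eqToHom p) (𝟙 Y) = eqToHom (by rw [p]) := by
  subst p; simp [M.h_id]

lemma hEqR (M : SemiMonoidal C) {X Y₁ Y₂ : C} (p : Y₁ = Y₂) :
    M.h (𝟙 X) (eqToHom p) = eqToHom (by rw [p]) := by
  subst p; simp [M.h_id]

/-- The constraints `λ`, `ρ` induced by a Saavedra unit `(I, α)` satisfy the
Kelly axiom `ρ_X ⊗ id_Y = id_X ⊗ λ_Y`. -/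
theorem stmt8 (M : SemiMonoidal C) (I : C) (α : M.t I I ⟶ I) (hα : IsIso α)
    (ffL : ∀ X Y : C, Function.Bijective fun f : X ⟶ Y => M.h (𝟙 I) f)
    (ffR : ∀ X Y : C, Function.Bijective fun f : X ⟶ Y => M.h f (𝟙 I))
    (lam : ∀ X : C, M.t I X ⟶ X) (rho : ∀ X : C, M.t X I ⟶ X)
    (hlam : ∀ X : C, M.h (𝟙 I) (lam X) = eqToHom (M.assoc I I X).symm ≫ M.h α (𝟙 X))
    (hrho : ∀ X : C, M.h (rho X) (𝟙 I) = eqToHom (M.assoc X I I) ≫ M.h (𝟙 X) α) :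
    ∀ X Y : C,
      M.h (rho X) (𝟙 Y) = eqToHom (M.assoc X I Y) ≫ M.h (𝟙 X) (lam Y) := by
  intro X Y
  -- lam Y is an isomorphism
  have hlamiso : IsIso (lam Y) := by
    have h1 : IsIso (M.h (𝟙 I) (lam Y)) := by
      rw [hlam]
      have : IsIso (M.h α (𝟙 Y)) := by
        refine ⟨M.h (inv α) (𝟙 Y), ?_, ?_⟩
        · rw [← M.h_comp]; simp [M.h_id]
        · rw [← M.h_comp]; simp [M.h_id]
      infer_instance
    obtain ⟨g, hg⟩ := (ffL Y (M.t I Y)).2 (inv (M.h (𝟙 I) (lam Y)))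
    simp only at hg
    refine ⟨g, ?_, ?_⟩
    · apply (ffL (M.t I Y) (M.t I Y)).1
      calc M.h (𝟙 I) (lam Y ≫ g) = M.h (𝟙 I ≫ 𝟙 I) (lam Y ≫ g) := by simp
        _ = M.h (𝟙 I) (lam Y) ≫ M.h (𝟙 I) g := M.h_comp _ _ _ _
        _ = 𝟙 _ := by rw [hg]; simp
        _ = M.h (𝟙 I) (𝟙 _) := (M.h_id _ _).symm
    · apply (ffL Y Y).1
      calc M.h (𝟙 I) (g ≫ lam Y) = M.h (𝟙 I ≫ 𝟙 I) (g ≫ lam Y) := by simp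
        _ = M.h (𝟙 I) g ≫ M.h (𝟙 I) (lam Y) := M.h_comp _ _ _ _
        _ = 𝟙 _ := by rw [hg]; simp
        _ = M.h (𝟙 I) (𝟙 _) := (M.h_id _ _).symm
  set B := M.h (𝟙 (M.t X I)) (lam Y) with hBdef
  have hBiso : IsIso B := by
    refine ⟨M.h (𝟙 (M.t X I)) (inv (lam Y)), ?_, ?_⟩
    · rw [hBdef, ← M.h_comp]; simp [M.h_id]
    · rw [hBdef, ← M.h_comp]; simp [M.h_id]
  set A := M.h (rho X) (𝟙 (M.t I Y)) with hAdef
  -- interchange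
  have key : B ≫ M.h (rho X) (𝟙 Y) = A ≫ M.h (𝟙 X) (lam Y) := by
    rw [hBdef, hAdef, ← M.h_comp, ← M.h_comp]; simp
  -- A = B ≫ eqToHom
  have hA : A = eqToHom (M.assoc (M.t X I) I Y).symm ≫
      (eqToHom (congrArg (fun Z => M.t Z Y) (M.assoc X I I)) ≫
        (eqToHom (M.assoc X (M.t I I) Y) ≫ M.h (𝟙 X) (M.h α (𝟙 Y)) ≫
          eqToHom (M.assoc X I Y).symm)) ≫ eqToHom (M.assoc X I Y) := by
    rw [hAdef, ← M.h_id I Y]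
    have := M.h_assoc (rho X) (𝟙 I) (𝟙 Y)
    rw [eq_comm, ← Category.assoc, ← eq_comm] at this
    -- h (rho X) (h 1 1) = eqToHom.symm ≫ h (h rho 1) 1 ≫ ... not directly; derive:
    have h2 : M.h (rho X) (M.h (𝟙 I) (𝟙 Y)) =
        eqToHom (M.assoc (M.t X I) I Y).symm ≫ M.h (M.h (rho X) (𝟙 I)) (𝟙 Y) ≫
          eqToHom (M.assoc X I Y) := by
      rw [M.h_assoc]; simp
    rw [h2, hrho]
    have h3 : M.h (eqToHom (M.assoc X I I) ≫ M.h (𝟙 X) α) (𝟙 Y) =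
        M.h (eqToHom (M.assoc X I I)) (𝟙 Y) ≫ M.h (M.h (𝟙 X) α) (𝟙 Y) := by
      rw [← M.h_comp]; simp
    rw [h3, hEqL, M.h_assoc]
  have hB : B = eqToHom (M.assoc X I (M.t I Y)) ≫
      (M.h (𝟙 X) (eqToHom (M.assoc I I Y).symm) ≫ M.h (𝟙 X) (M.h α (𝟙 Y))) ≫
        eqToHom (M.assoc X I Y).symm := by
    rw [hBdef, ← M.h_id X I]
    rw [M.h_assoc, hlam]
    have h4 : M.h (𝟙 X) (eqToHom (M.assoc I I Y).symm ≫ M.h α (𝟙 Y)) =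
        M.h (𝟙 X) (eqToHom (M.assoc I I Y).symm) ≫ M.h (𝟙 X) (M.h α (𝟙 Y)) := by
      rw [← M.h_comp]; simp
    rw [h4]
  have hAB : A = B ≫ eqToHom (M.assoc X I Y) := by
    rw [hA, hB, hEqR]
    simp [eqToHom_trans]
  rw [hAB, Category.assoc] at key
  exact (cancel_epi B).mp key
end

section
/- The multiplication α of a Saavedra unit (I, α) is automatically associative: id_I ⊗ α = α ⊗ id_I. In other words, every Saavedra unit is an idempotent (a semi-monoid). -/
open CategoryTheory

universe v u v' u'

variable {C : Type u} [Category.{v} C]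

lemma h_eqToHom_id (M : SemiMonoidal C) {X Y Z : C} (p : X = Y) :
    M.h (eqToHom p) (𝟙 Z) = eqToHom (by rw [p]) := by
  subst p; simp [M.h_id]

lemma h_id_eqToHom (M : SemiMonoidal C) {X Y Z : C} (p : Y = Z) :
    M.h (𝟙 X) (eqToHom p) = eqToHom (by rw [p]) := by
  subst p; simp [M.h_id]

/-- The multiplication of a Saavedra unit is automatically associative:
`id_I ⊗ α = α ⊗ id_I`. -/
theorem stmt9 (M : SemiMonoidal C) (I : C) (α : M.t I I ⟶ I) (hα : IsIso α)
    (ffL : ∀ X Y : C, Function.Bijective fun f : X ⟶ Y => M.h (𝟙 I) f)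
    (ffR : ∀ X Y : C, Function.Bijective fun f : X ⟶ Y => M.h f (𝟙 I)) :
    M.h (𝟙 I) α = eqToHom (M.assoc I I I).symm ≫ M.h α (𝟙 I) := by
  obtain ⟨ρ, hρ⟩ := (ffR (M.t I I) I).2 (eqToHom (M.assoc I I I) ≫ M.h (𝟙 I) α)
  simp only at hρ
  haveI : IsIso (M.h (𝟙 I) α) := by
    refine ⟨M.h (𝟙 I) (inv α), ?_, ?_⟩ <;>
      rw [← M.h_comp] <;> simp [M.h_id]
  -- Step 1 : interchange + cancellation
  have s1 : M.h ρ (𝟙 (M.t I I)) = M.h (𝟙 (M.t I I)) α ≫ eqToHom (M.assoc I I I) := by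
    have e1 : M.h ρ (𝟙 (M.t I I)) ≫ M.h (𝟙 I) α
        = M.h (𝟙 (M.t I I)) α ≫ M.h ρ (𝟙 I) := by
      rw [← M.h_comp, ← M.h_comp]; simp
    rw [hρ] at e1
    rw [← cancel_mono (M.h (𝟙 I) α)]
    simpa using e1
  -- Step 2 : compute (ρ ⊗ 1) ⊗ 1 in two ways
  have key : M.h (M.h ρ (𝟙 I)) (𝟙 I)
      = M.h (eqToHom (M.assoc I I I) ≫ M.h (𝟙 I) ρ) (𝟙 I) := by
    have L : M.h (M.h ρ (𝟙 I)) (𝟙 I)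
        = eqToHom (M.assoc (M.t I I) I I) ≫ M.h ρ (M.h (𝟙 I) (𝟙 I))
            ≫ eqToHom (M.assoc I I I).symm := M.h_assoc ρ (𝟙 I) (𝟙 I)
    rw [M.h_id] at L
    rw [s1] at L
    have R1 : M.h (eqToHom (M.assoc I I I) ≫ M.h (𝟙 I) ρ) (𝟙 I)
        = M.h (eqToHom (M.assoc I I I)) (𝟙 I) ≫ M.h (M.h (𝟙 I) ρ) (𝟙 I) := by
      rw [← M.h_comp]; simp
    have R2 : M.h (M.h (𝟙 I) ρ) (𝟙 I)
        = eqToHom (M.assoc I (M.t I I) I) ≫ M.h (𝟙 I) (M.h ρ (𝟙 I))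
            ≫ eqToHom (M.assoc I I I).symm := M.h_assoc (𝟙 I) ρ (𝟙 I)
    rw [hρ] at R2
    have R3 : M.h (𝟙 I) (eqToHom (M.assoc I I I) ≫ M.h (𝟙 I) α)
        = M.h (𝟙 I) (eqToHom (M.assoc I I I)) ≫ M.h (𝟙 I) (M.h (𝟙 I) α) := by
      rw [← M.h_comp]; simp
    have R4 : M.h (𝟙 I) (M.h (𝟙 I) α)
        = eqToHom (M.assoc I I (M.t I I)).symm ≫ M.h (M.h (𝟙 I) (𝟙 I)) α
            ≫ eqToHom (M.assoc I I I) := by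
      rw [M.h_assoc]; simp
    rw [M.h_id] at R4
    rw [L, R1, R2, R3, R4, h_eqToHom_id M _, h_id_eqToHom M _]
    simp [eqToHom_trans, eqToHom_trans_assoc]
  have e2 : M.h ρ (𝟙 I) = eqToHom (M.assoc I I I) ≫ M.h (𝟙 I) ρ :=
    (ffR (M.t (M.t I I) I) (M.t I I)).1 key
  have e3 : M.h (𝟙 I) ρ = M.h (𝟙 I) α := by
    rw [← cancel_epi (eqToHom (M.assoc I I I))]
    exact e2.symm.trans hρ
  obtain rfl : ρ = α := (ffL (M.t I I) I).1 e3
  rw [hρ]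
  simp
end

section
/- For a Saavedra unit (I, α), the functors X ↦ I⊗X and X ↦ X⊗I are not merely fully faithful but are equivalences of categories. -/
open CategoryTheory

universe v u v' u'

variable {C : Type u} [Category.{v} C]

/-- Tensoring with `I` on the left, as a functor. -/
def tensorLeftF (M : SemiMonoidal C) (I : C) : C ⥤ C where
  obj X := M.t I X
  map f := M.h (𝟙 I) f
  map_id X := M.h_id I X
  map_comp f g := by
    have := M.h_comp (𝟙 I) (𝟙 I) f g
    simpa using this

/-- Tensoring with `I` on the right, as a functor. -/
def tensorRightF (M : SemiMonoidal C) (I : C) : C ⥤ C where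
  obj X := M.t X I
  map f := M.h f (𝟙 I)
  map_id X := M.h_id X I
  map_comp f g := by
    have := M.h_comp f g (𝟙 I) (𝟙 I)
    simpa using this


/-! Full faithfulness descends the isomorphism `I ⊗ (I ⊗ X) = (I ⊗ I) ⊗ X ≅ I ⊗ X` induced by `α`
to an isomorphism `I ⊗ X ≅ X`, so tensoring with `I` is also essentially surjective; the same
works on the right. -/

namespace CategoryTheory.Functor

lemma isEquivalence_of_obj_obj_iso {F : C ⥤ C}
    (hF : ∀ X Y : C, Function.Bijective (F.map : (X ⟶ Y) → (F.obj X ⟶ F.obj Y)))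
    (e : ∀ X, F.obj (F.obj X) ≅ F.obj X) : F.IsEquivalence :=
  have hFF : F.FullyFaithful := ((FullyFaithful.nonempty_iff_map_bijective F).2 hF).some
  have := hFF.full
  have := hFF.faithful
  { essSurj := ⟨fun X => ⟨X, ⟨hFF.preimageIso (e X)⟩⟩⟩ }

end CategoryTheory.Functor

namespace SemiMonoidal

def tensorIso (M : SemiMonoidal C) {X₁ X₂ Y₁ Y₂ : C} (e : X₁ ≅ X₂) (e' : Y₁ ≅ Y₂) :
    M.t X₁ Y₁ ≅ M.t X₂ Y₂ where
  hom := M.h e.hom e'.hom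
  inv := M.h e.inv e'.inv
  hom_inv_id := by rw [← M.h_comp, e.hom_inv_id, e'.hom_inv_id, M.h_id]
  inv_hom_id := by rw [← M.h_comp, e.inv_hom_id, e'.inv_hom_id, M.h_id]

end SemiMonoidal

/-- For a Saavedra unit `(I, α)`, tensoring with `I` on either side is not merely
fully faithful but an equivalence of categories. -/
theorem stmt10 (M : SemiMonoidal C) (I : C) (α : M.t I I ⟶ I) (hα : IsIso α)
    (ffL : ∀ X Y : C, Function.Bijective fun f : X ⟶ Y => M.h (𝟙 I) f)
    (ffR : ∀ X Y : C, Function.Bijective fun f : X ⟶ Y => M.h f (𝟙 I)) :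
    (tensorLeftF M I).IsEquivalence ∧ (tensorRightF M I).IsEquivalence :=
  ⟨(tensorLeftF M I).isEquivalence_of_obj_obj_iso ffL fun X =>
      eqToIso (M.assoc I I X).symm ≪≫ M.tensorIso (asIso α) (Iso.refl X),
    (tensorRightF M I).isEquivalence_of_obj_obj_iso ffR fun X =>
      eqToIso (M.assoc X I I) ≪≫ M.tensorIso (Iso.refl X) (asIso α)⟩
end

section
/- If (I, λ, ρ) is an LR unit in a strict semi-monoidal category, then (I, α) with α := λ_I = ρ_I is a Saavedra unit; in particular the functors X ↦ I⊗X and X ↦ X⊗I are equivalences. -/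
open CategoryTheory

universe v u v' u'

variable {C : Type u} [Category.{v} C]

/-- An LR unit `(I, λ, ρ)` gives a Saavedra unit via `α := λ_I = ρ_I`:
the functors `X ↦ I⊗X` and `X ↦ X⊗I` are fully faithful (so `(I, λ_I)` is a
cancellable pseudo-idempotent) and indeed equivalences. -/
theorem stmt11 (M : SemiMonoidal C) (I : C)
    (lam : ∀ X : C, M.t I X ⟶ X) (rho : ∀ X : C, M.t X I ⟶ X)
    (hU : IsLRUnit M I lam rho) :
    (∀ X Y : C, Function.Bijective fun f : X ⟶ Y => M.h (𝟙 I) f) ∧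
    (∀ X Y : C, Function.Bijective fun f : X ⟶ Y => M.h f (𝟙 I)) ∧
    IsIso (lam I) ∧
    (tensorLeftF M I).IsEquivalence ∧ (tensorRightF M I).IsEquivalence := by

  have lamNat : tensorLeftF M I ≅ 𝟭 C := by
    refine NatIso.ofComponents (fun X => @asIso _ _ _ _ (lam X) (hU.lam_iso X)) ?_
    intro X Y f
    simpa [tensorLeftF] using hU.lam_nat f
  have rhoNat : tensorRightF M I ≅ 𝟭 C := by
    refine NatIso.ofComponents (fun X => @asIso _ _ _ _ (rho X) (hU.rho_iso X)) ?_
    intro X Y f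
    simpa [tensorRightF] using hU.rho_nat f
  have hL : (tensorLeftF M I).IsEquivalence :=
    Functor.isEquivalence_of_iso lamNat.symm
  have hR : (tensorRightF M I).IsEquivalence :=
    Functor.isEquivalence_of_iso rhoNat.symm
  refine ⟨fun X Y => ?_, fun X Y => ?_, hU.lam_iso I, hL, hR⟩
  · exact ((tensorLeftF M I).asEquivalence.fullyFaithfulFunctor).map_bijective X Y
  · exact ((tensorRightF M I).asEquivalence.fullyFaithfulFunctor).map_bijective X Y
end

section
/- In a strict semi-monoidal category, if (I, λ, ρ) and (I, λ, ρ') are both LR units with the same underlying object and the same left constraint, then ρ = ρ'. Dually, the right constraint determines the left constraint. -/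
open CategoryTheory

universe v u v' u'

variable {C : Type u} [Category.{v} C]

/-- The left and right constraints of an LR unit determine each other:
with the same `I` and `λ`, necessarily `ρ = ρ'`; dually with `ρ` fixed, `λ = λ'`. -/
theorem stmt13 (M : SemiMonoidal C) (I : C)
    (lam : ∀ X : C, M.t I X ⟶ X) (rho : ∀ X : C, M.t X I ⟶ X)
    (rho' : ∀ X : C, M.t X I ⟶ X) (lam' : ∀ X : C, M.t I X ⟶ X)
    (hU : IsLRUnit M I lam rho) :
    (IsLRUnit M I lam rho' → rho = rho') ∧
    (IsLRUnit M I lam' rho → lam = lam') := by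
  constructor
  · intro hU'
    funext X
    have hiso := hU.rho_iso (M.t X I)
    have hh : M.h (rho X) (𝟙 I) = M.h (rho' X) (𝟙 I) := by
      have h1 := hU.ax4 X I
      have h2 := hU'.ax4 X I
      rw [h1] at h2
      exact (cancel_epi (eqToHom (M.assoc X I I).symm)).mp h2
    have e1 : M.h (rho X) (𝟙 I) ≫ rho X = rho (M.t X I) ≫ rho X := hU.rho_nat (rho X)
    have e2 : M.h (rho' X) (𝟙 I) ≫ rho X = rho (M.t X I) ≫ rho' X := hU.rho_nat (rho' X)
    rw [hh, e2] at e1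
    exact ((cancel_epi (rho (M.t X I))).mp e1.symm)
  · intro hU'
    funext Y
    have hh : M.h (𝟙 I) (lam Y) = M.h (𝟙 I) (lam' Y) := by
      rw [hU.ax4 I Y, hU'.ax4 I Y]
    have e1 : M.h (𝟙 I) (lam Y) ≫ lam Y = lam (M.t I Y) ≫ lam Y := hU.lam_nat (lam Y)
    have e2 : M.h (𝟙 I) (lam' Y) ≫ lam Y = lam (M.t I Y) ≫ lam' Y := hU.lam_nat (lam' Y)
    rw [hh, e2] at e1
    have := hU.lam_iso (M.t I Y)
    exact ((cancel_epi (lam (M.t I Y))).mp e1.symm)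
end

section
/- If an object I of a strict semi-monoidal category admits natural isomorphisms λ_X : I⊗X ≅ X and ρ_X : X⊗I ≅ X with λ_I = ρ_I (but not assumed to satisfy any other unit axiom), then I admits an LR unit structure (possibly with constraints different from λ and ρ). -/
open CategoryTheory

universe v u v' u'

variable {C : Type u} [Category.{v} C]

/-- If `I` admits natural isomorphisms `λ_X : I⊗X ≅ X` and `ρ_X : X⊗I ≅ X`
with `λ_I = ρ_I` (no further axioms), then `I` admits an LR unit structure
(possibly with different constraints). -/
theorem stmt14 (M : SemiMonoidal C) (I : C)
    (lam : ∀ X : C, M.t I X ⟶ X) (rho : ∀ X : C, M.t X I ⟶ X)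
    (lam_iso : ∀ X : C, IsIso (lam X)) (rho_iso : ∀ X : C, IsIso (rho X))
    (lam_nat : ∀ {X Y : C} (f : X ⟶ Y), M.h (𝟙 I) f ≫ lam Y = lam X ≫ f)
    (rho_nat : ∀ {X Y : C} (f : X ⟶ Y), M.h f (𝟙 I) ≫ rho Y = rho X ≫ f)
    (ax1 : lam I = rho I) :
    ∃ (lam' : ∀ X : C, M.t I X ⟶ X) (rho' : ∀ X : C, M.t X I ⟶ X),
      IsLRUnit M I lam' rho' := by
  haveI iLam : ∀ X : C, IsIso (lam X) := lam_iso
  haveI iRho : ∀ X : C, IsIso (rho X) := rho_iso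
  -- basic combinators
  have hidr : ∀ {W X Y Z : C} (f : X ⟶ Y) (g : Y ⟶ Z),
      M.h (𝟙 W) (f ≫ g) = M.h (𝟙 W) f ≫ M.h (𝟙 W) g := by
    intro W X Y Z f g; rw [← M.h_comp, Category.comp_id]
  have hidl : ∀ {W X Y Z : C} (f : X ⟶ Y) (g : Y ⟶ Z),
      M.h (f ≫ g) (𝟙 W) = M.h f (𝟙 W) ≫ M.h g (𝟙 W) := by
    intro W X Y Z f g; rw [← M.h_comp, Category.comp_id]
  have hEr : ∀ {X Y₁ Y₂ : C} (p : Y₁ = Y₂),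
      M.h (𝟙 X) (eqToHom p) = eqToHom (congrArg (M.t X) p) := by
    intro X Y₁ Y₂ p; subst p; simp [M.h_id]
  have hEl : ∀ {X₁ X₂ Y : C} (p : X₁ = X₂),
      M.h (eqToHom p) (𝟙 Y) = eqToHom (congrArg (fun Z => M.t Z Y) p) := by
    intro X₁ X₂ Y p; subst p; simp [M.h_id]
  have hAs : ∀ {X₁ X₂ Y₁ Y₂ Z₁ Z₂ : C} (f : X₁ ⟶ X₂) (g : Y₁ ⟶ Y₂) (k : Z₁ ⟶ Z₂),
      M.h f (M.h g k) =
        eqToHom (M.assoc X₁ Y₁ Z₁).symm ≫ M.h (M.h f g) k ≫ eqToHom (M.assoc X₂ Y₂ Z₂) := by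
    intro _ _ _ _ _ _ f g k; rw [M.h_assoc]; simp
  -- cancellation
  have cl : ∀ {X Y : C} {f g : X ⟶ Y}, M.h (𝟙 I) f = M.h (𝟙 I) g → f = g := by
    intro X Y f g h
    have h1 := lam_nat f
    rw [h, lam_nat g] at h1
    exact ((cancel_epi (lam X)).mp h1).symm
  have cr : ∀ {X Y : C} {f g : X ⟶ Y}, M.h f (𝟙 I) = M.h g (𝟙 I) → f = g := by
    intro X Y f g h
    have h1 := rho_nat f
    rw [h, rho_nat g] at h1
    exact ((cancel_epi (rho X)).mp h1).symm
  have lamH : ∀ {X Y : C} (f : X ⟶ Y), M.h (𝟙 I) f = lam X ≫ f ≫ inv (lam Y) := by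
    intro X Y f
    rw [← Category.assoc, ← lam_nat f, Category.assoc]; simp
  have rhoH : ∀ {X Y : C} (f : X ⟶ Y), M.h f (𝟙 I) = rho X ≫ f ≫ inv (rho Y) := by
    intro X Y f
    rw [← Category.assoc, ← rho_nat f, Category.assoc]; simp
  obtain ⟨L, hLdef⟩ : ∃ L : ∀ X : C, M.t I X ⟶ X, ∀ X,
      L X = inv (lam (M.t I X)) ≫ eqToHom (M.assoc I I X).symm ≫ M.h (rho I) (𝟙 X) ≫ lam X :=
    ⟨_, fun _ => rfl⟩
  obtain ⟨R, hRdef⟩ : ∃ R : ∀ X : C, M.t X I ⟶ X, ∀ X,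
      R X = inv (rho (M.t X I)) ≫ eqToHom (M.assoc X I I) ≫ M.h (𝟙 X) (lam I) ≫ rho X :=
    ⟨_, fun _ => rfl⟩
  have K1 : ∀ X : C, M.h (𝟙 I) (L X) = eqToHom (M.assoc I I X).symm ≫ M.h (rho I) (𝟙 X) := by
    intro X
    rw [lamH (L X), hLdef X]; simp
  have K2 : ∀ X : C, M.h (R X) (𝟙 I) = eqToHom (M.assoc X I I) ≫ M.h (𝟙 X) (lam I) := by
    intro X
    rw [rhoH (R X), hRdef X]; simp
  have hisor : ∀ {X₁ X₂ : C} (f : X₁ ⟶ X₂) [IsIso f] (Y : C), IsIso (M.h f (𝟙 Y)) := by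
    intro X₁ X₂ f _ Y
    exact ⟨M.h (inv f) (𝟙 Y), by rw [← M.h_comp]; simp [M.h_id], by rw [← M.h_comp]; simp [M.h_id]⟩
  have hisol : ∀ (X : C) {Y₁ Y₂ : C} (g : Y₁ ⟶ Y₂) [IsIso g], IsIso (M.h (𝟙 X) g) := by
    intro X Y₁ Y₂ g _
    exact ⟨M.h (𝟙 X) (inv g), by rw [← M.h_comp]; simp [M.h_id], by rw [← M.h_comp]; simp [M.h_id]⟩
  have iL : ∀ X : C, IsIso (L X) := by
    intro X
    rw [hLdef X]
    haveI := hisor (rho I) X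
    infer_instance
  have iR : ∀ X : C, IsIso (R X) := by
    intro X
    rw [hRdef X]
    haveI := hisol X (lam I)
    infer_instance
  -- naturality of L
  have lnat : ∀ {X Y : C} (f : X ⟶ Y), M.h (𝟙 I) f ≫ L Y = L X ≫ f := by
    intro X Y f
    apply cl
    rw [hidr, hidr, K1, K1, hAs (𝟙 I) (𝟙 I) f, M.h_id]
    simp only [Category.assoc, eqToHom_trans_assoc, eqToHom_refl, Category.id_comp]
    rw [← M.h_comp, ← M.h_comp]
    simp
  have rnat : ∀ {X Y : C} (f : X ⟶ Y), M.h f (𝟙 I) ≫ R Y = R X ≫ f := by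
    intro X Y f
    apply cr
    rw [hidl, hidl, K2, K2, M.h_assoc f (𝟙 I) (𝟙 I), M.h_id]
    simp only [Category.assoc, eqToHom_trans_assoc, eqToHom_refl, Category.id_comp]
    rw [← M.h_comp, ← M.h_comp]
    simp
  have ax2' : ∀ X Y : C, M.h (L X) (𝟙 Y) = eqToHom (M.assoc I X Y) ≫ L (M.t X Y) := by
    intro X Y
    apply cl
    rw [hidr, K1, hEr, hAs (𝟙 I) (L X) (𝟙 Y), K1, hidl, hEl,
      M.h_assoc (rho I) (𝟙 X) (𝟙 Y), M.h_id]
    simp [eqToHom_trans]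
  have ax3' : ∀ X Y : C, M.h (𝟙 X) (R Y) = eqToHom (M.assoc X Y I).symm ≫ R (M.t X Y) := by
    intro X Y
    apply cr
    rw [hidl, K2, hEl, M.h_assoc (𝟙 X) (R Y) (𝟙 I), K2, hidr, hEr,
      hAs (𝟙 X) (𝟙 Y) (lam I), M.h_id]
    simp [eqToHom_trans]
  -- key interchange lemma for ax4
  have ax4' : ∀ X Y : C, M.h (𝟙 X) (L Y) = eqToHom (M.assoc X I Y).symm ≫ M.h (R X) (𝟙 Y) := by
    intro X Y
    have pE : M.t (M.t X I) (M.t I Y) = M.t X (M.t (M.t I I) Y) := by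
      rw [M.assoc X I (M.t I Y), M.assoc I I Y]
    have hB : M.h (𝟙 (M.t X I)) (L Y) =
        eqToHom pE ≫ M.h (𝟙 X) (M.h (rho I) (𝟙 Y)) ≫ eqToHom (M.assoc X I Y).symm := by
      rw [← M.h_id X I, M.h_assoc (𝟙 X) (𝟙 I) (L Y), K1, hidr, hEr]
      simp [eqToHom_trans]
    have hA : M.h (R X) (𝟙 (M.t I Y)) =
        eqToHom pE ≫ M.h (𝟙 X) (M.h (rho I) (𝟙 Y)) := by
      rw [← M.h_id I Y, hAs (R X) (𝟙 I) (𝟙 Y), K2, ax1, hidl, hEl,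
        M.h_assoc (𝟙 X) (rho I) (𝟙 Y)]
      simp [eqToHom_trans]
    have key : M.h (R X) (𝟙 (M.t I Y)) =
        M.h (𝟙 (M.t X I)) (L Y) ≫ eqToHom (M.assoc X I Y) := by
      rw [hA, hB]; simp [eqToHom_trans]
    have step : M.h (𝟙 (M.t X I)) (L Y) ≫ eqToHom (M.assoc X I Y) ≫ M.h (𝟙 X) (L Y) =
        M.h (𝟙 (M.t X I)) (L Y) ≫ M.h (R X) (𝟙 Y) := by
      rw [← Category.assoc, ← key, ← M.h_comp, ← M.h_comp]
      simp
    haveI := iL Y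
    haveI := hisol (M.t X I) (L Y)
    have := (cancel_epi (M.h (𝟙 (M.t X I)) (L Y))).mp step
    rw [← this]; simp
  -- ax1 for the new structure
  have hLL : ∀ X : C, L (M.t I X) = M.h (𝟙 I) (L X) := by
    intro X
    haveI := iL X
    exact ((cancel_mono (L X)).mp (lnat (L X))).symm
  have hRR : ∀ X : C, R (M.t X I) = M.h (R X) (𝟙 I) := by
    intro X
    haveI := iR X
    exact ((cancel_mono (R X)).mp (rnat (R X))).symm
  have e1 : L I = rho I := by
    apply cr
    rw [ax2' I I, hLL I, K1 I]
    simp [eqToHom_trans]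
  have e2 : R I = lam I := by
    apply cl
    rw [ax3' I I, hRR I, K2 I]
    simp [eqToHom_trans]
  refine ⟨L, R, iL, iR, lnat, rnat, ?_, ax2', ax3', ax4'⟩
  rw [e1, e2, ax1]
end

section
/- An isomorphism ψ : I → J between the underlying objects of two LR units which is compatible with the left constraints (λ'_X ∘ (ψ ⊗ id_X) = λ_X for all X) is a semi-monoid homomorphism with respect to the induced idempotent structures α = λ^I_I and β = λ^J_J, i.e., ψ ∘ α = β ∘ (ψ ⊗ ψ). -/
open CategoryTheory

universe v u v' u'

variable {C : Type u} [Category.{v} C]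

/-- An isomorphism `ψ : I → J` between LR units compatible with the left
constraints is a semi-monoid homomorphism for `α = λ_I` and `β = λ'_J`:
`ψ ∘ α = β ∘ (ψ ⊗ ψ)`. -/
theorem stmt16 (M : SemiMonoidal C) (I J : C)
    (lam : ∀ X : C, M.t I X ⟶ X) (rho : ∀ X : C, M.t X I ⟶ X)
    (lam' : ∀ X : C, M.t J X ⟶ X) (rho' : ∀ X : C, M.t X J ⟶ X)
    (hI : IsLRUnit M I lam rho) (hJ : IsLRUnit M J lam' rho')
    (ψ : I ⟶ J) (hψiso : IsIso ψ)
    (hψ : ∀ X : C, M.h ψ (𝟙 X) ≫ lam' X = lam X) :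
    M.h ψ ψ ≫ lam' J = lam I ≫ ψ := by
  have h1 : M.h ψ ψ = M.h (𝟙 I) ψ ≫ M.h ψ (𝟙 J) := by
    rw [← M.h_comp]; simp
  rw [h1, Category.assoc, hψ J, hI.lam_nat ψ]
end

section
/- Let ψ : I → J be a tensor cancellable semi-monoid homomorphism between Saavedra units (I, α) and (J, β), and let λ^I, λ^J be the induced left constraints. Then for every object X, λ^J_X ∘ (ψ ⊗ id_X) = λ^I_X; similarly for the right constraints. Hence the category of Saavedra units is isomorphic to the category of LR units, and in particular contractible. -/
open CategoryTheory

universe v u v' u'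

variable {C : Type u} [Category.{v} C]

/-- A tensor cancellable semi-monoid homomorphism `ψ` between Saavedra units
`(I,α)` and `(J,β)` is compatible with the induced left and right constraints:
`λ^J_X ∘ (ψ ⊗ id_X) = λ^I_X` and `ρ^J_X ∘ (id_X ⊗ ψ) = ρ^I_X`. -/
theorem stmt17 (M : SemiMonoidal C) (I J : C)
    (α : M.t I I ⟶ I) (β : M.t J J ⟶ J) (hα : IsIso α) (hβ : IsIso β)
    (ffIL : ∀ X Y : C, Function.Bijective fun f : X ⟶ Y => M.h (𝟙 I) f)
    (ffIR : ∀ X Y : C, Function.Bijective fun f : X ⟶ Y => M.h f (𝟙 I))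
    (ffJL : ∀ X Y : C, Function.Bijective fun f : X ⟶ Y => M.h (𝟙 J) f)
    (ffJR : ∀ X Y : C, Function.Bijective fun f : X ⟶ Y => M.h f (𝟙 J))
    (ψ : I ⟶ J)
    (tcL : ∀ X Y : C, Function.Bijective fun f : X ⟶ Y => M.h ψ f)
    (tcR : ∀ X Y : C, Function.Bijective fun f : X ⟶ Y => M.h f ψ)
    (hhom : M.h ψ ψ ≫ β = α ≫ ψ)
    (lamI : ∀ X : C, M.t I X ⟶ X) (rhoI : ∀ X : C, M.t X I ⟶ X)
    (lamJ : ∀ X : C, M.t J X ⟶ X) (rhoJ : ∀ X : C, M.t X J ⟶ X)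
    (hlamI : ∀ X : C, M.h (𝟙 I) (lamI X) = eqToHom (M.assoc I I X).symm ≫ M.h α (𝟙 X))
    (hrhoI : ∀ X : C, M.h (rhoI X) (𝟙 I) = eqToHom (M.assoc X I I) ≫ M.h (𝟙 X) α)
    (hlamJ : ∀ X : C, M.h (𝟙 J) (lamJ X) = eqToHom (M.assoc J J X).symm ≫ M.h β (𝟙 X))
    (hrhoJ : ∀ X : C, M.h (rhoJ X) (𝟙 J) = eqToHom (M.assoc X J J) ≫ M.h (𝟙 X) β) :
    (∀ X : C, M.h ψ (𝟙 X) ≫ lamJ X = lamI X) ∧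
    (∀ X : C, M.h (𝟙 X) ψ ≫ rhoJ X = rhoI X) := by
  constructor
  · intro X
    apply (tcL (M.t I X) X).1
    show M.h ψ (M.h ψ (𝟙 X) ≫ lamJ X) = M.h ψ (lamI X)
    have h1 : M.h ψ (M.h ψ (𝟙 X) ≫ lamJ X)
        = M.h ψ (M.h ψ (𝟙 X)) ≫ M.h (𝟙 J) (lamJ X) := by
      rw [← M.h_comp]; simp
    have h2 : M.h ψ (M.h ψ (𝟙 X))
        = eqToHom (M.assoc I I X).symm ≫ M.h (M.h ψ ψ) (𝟙 X) ≫ eqToHom (M.assoc J J X) := by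
      rw [M.h_assoc]; simp
    have h3 : M.h ψ (lamI X) = M.h (𝟙 I) (lamI X) ≫ M.h ψ (𝟙 X) := by
      rw [← M.h_comp]; simp
    rw [h1, h2, h3, hlamJ, hlamI]
    simp only [Category.assoc, eqToHom_trans_assoc, eqToHom_refl, Category.id_comp]
    congr 1
    rw [← M.h_comp, ← M.h_comp, Category.comp_id, hhom]
  · intro X
    apply (tcR (M.t X I) X).1
    show M.h (M.h (𝟙 X) ψ ≫ rhoJ X) ψ = M.h (rhoI X) ψ
    have h1 : M.h (M.h (𝟙 X) ψ ≫ rhoJ X) ψ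
        = M.h (M.h (𝟙 X) ψ) ψ ≫ M.h (rhoJ X) (𝟙 J) := by
      rw [← M.h_comp]; simp
    have h2 : M.h (M.h (𝟙 X) ψ) ψ
        = eqToHom (M.assoc X I I) ≫ M.h (𝟙 X) (M.h ψ ψ) ≫ eqToHom (M.assoc X J J).symm := by
      rw [M.h_assoc]
    have h3 : M.h (rhoI X) ψ = M.h (rhoI X) (𝟙 I) ≫ M.h (𝟙 X) ψ := by
      rw [← M.h_comp]; simp
    rw [h1, h2, h3, hrhoJ, hrhoI]
    simp only [Category.assoc, eqToHom_trans_assoc, eqToHom_refl, Category.id_comp]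
    congr 1
    rw [← M.h_comp, ← M.h_comp, Category.comp_id, hhom]
end

section
/- For a strong multiplicative functor F : C → D between monoidal categories, an isomorphism φ_0 : J → F(I) is an LR unit compatibility (compatible with both left and right constraints) if and only if it is a semi-monoid isomorphism with respect to β and the composite F(α) ∘ φ_2 : F(I)⊗F(I) → F(I⊗I) → F(I). In particular, compatibility with the left constraints for the single object X = I implies compatibility with all left and right constraints. -/
open CategoryTheory

universe v u v' u'

variable {C : Type u} [Category.{v} C]

section Helpers

variable {E : Type u} [Category.{v} E]

private lemma h_isIso (M : SemiMonoidal E) {X₁ X₂ Y₁ Y₂ : E}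
    (f : X₁ ⟶ X₂) (g : Y₁ ⟶ Y₂) (hf : IsIso f) (hg : IsIso g) :
    IsIso (M.h f g) := by
  refine ⟨⟨M.h (inv f) (inv g), ?_, ?_⟩⟩ <;> rw [← M.h_comp] <;> simp [M.h_id]

private lemma h_comp_right (M : SemiMonoidal E) {X₁ X₂ X₃ Y : E}
    (f : X₁ ⟶ X₂) (g : X₂ ⟶ X₃) :
    M.h (f ≫ g) (𝟙 Y) = M.h f (𝟙 Y) ≫ M.h g (𝟙 Y) := by
  rw [← M.h_comp]; simp

private lemma h_comp_left (M : SemiMonoidal E) {Y X₁ X₂ X₃ : E}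
    (f : X₁ ⟶ X₂) (g : X₂ ⟶ X₃) :
    M.h (𝟙 Y) (f ≫ g) = M.h (𝟙 Y) f ≫ M.h (𝟙 Y) g := by
  rw [← M.h_comp]; simp

private lemma h_exch (M : SemiMonoidal E) {X₁ X₂ Y₁ Y₂ : E}
    (f : X₁ ⟶ X₂) (g : Y₁ ⟶ Y₂) :
    M.h f (𝟙 Y₁) ≫ M.h (𝟙 X₂) g = M.h (𝟙 X₁) g ≫ M.h f (𝟙 Y₂) := by
  rw [← M.h_comp, ← M.h_comp]; simp

private lemma h_exch_assoc (M : SemiMonoidal E) {X₁ X₂ Y₁ Y₂ Z : E}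
    (f : X₁ ⟶ X₂) (g : Y₁ ⟶ Y₂) (z : M.t X₂ Y₂ ⟶ Z) :
    M.h f (𝟙 Y₁) ≫ M.h (𝟙 X₂) g ≫ z = M.h (𝟙 X₁) g ≫ M.h f (𝟙 Y₂) ≫ z := by
  rw [← Category.assoc, h_exch, Category.assoc]

private lemma lam_cancel {N : SemiMonoidal E} {J : E} {lamD : ∀ X : E, N.t J X ⟶ X}
    {rhoD : ∀ X : E, N.t X J ⟶ X} (hJ : IsLRUnit N J lamD rhoD)
    {A B : E} {f g : A ⟶ B} (hfg : N.h (𝟙 J) f = N.h (𝟙 J) g) : f = g := by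
  have h1 := hJ.lam_nat f
  rw [hfg, hJ.lam_nat g] at h1
  haveI := hJ.lam_iso A
  exact ((cancel_epi (lamD A)).1 h1).symm

private lemma rho_cancel {N : SemiMonoidal E} {J : E} {lamD : ∀ X : E, N.t J X ⟶ X}
    {rhoD : ∀ X : E, N.t X J ⟶ X} (hJ : IsLRUnit N J lamD rhoD)
    {A B : E} {f g : A ⟶ B} (hfg : N.h f (𝟙 J) = N.h g (𝟙 J)) : f = g := by
  have h1 := hJ.rho_nat f
  rw [hfg, hJ.rho_nat g] at h1
  haveI := hJ.rho_iso A
  exact ((cancel_epi (rhoD A)).1 h1).symm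

end Helpers

private theorem stmt18_key {C : Type u} [Category.{v} C] {D : Type u'} [Category.{v'} D]
    (M : SemiMonoidal C) (N : SemiMonoidal D) (F : C ⥤ D)
    (φ₂ : ∀ X Y : C, N.t (F.obj X) (F.obj Y) ⟶ F.obj (M.t X Y))
    (φ₂iso : ∀ X Y : C, IsIso (φ₂ X Y))
    (φ₂nat : ∀ {X₁ X₂ Y₁ Y₂ : C} (f : X₁ ⟶ X₂) (g : Y₁ ⟶ Y₂),
      N.h (F.map f) (F.map g) ≫ φ₂ X₂ Y₂ = φ₂ X₁ Y₁ ≫ F.map (M.h f g))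
    (φ₂assoc : ∀ X Y Z : C,
      N.h (φ₂ X Y) (𝟙 (F.obj Z)) ≫ φ₂ (M.t X Y) Z =
        eqToHom (N.assoc (F.obj X) (F.obj Y) (F.obj Z)) ≫
          N.h (𝟙 (F.obj X)) (φ₂ Y Z) ≫ φ₂ X (M.t Y Z) ≫
            eqToHom (congrArg F.obj (M.assoc X Y Z)).symm)
    (I : C) (lamC : ∀ X : C, M.t I X ⟶ X) (rhoC : ∀ X : C, M.t X I ⟶ X)
    (hI : IsLRUnit M I lamC rhoC)
    (J : D) (lamD : ∀ X : D, N.t J X ⟶ X) (rhoD : ∀ X : D, N.t X J ⟶ X)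
    (hJ : IsLRUnit N J lamD rhoD)
    (φ₀ : J ⟶ F.obj I) (hφ₀ : IsIso φ₀)
    (hP : N.h φ₀ (𝟙 (F.obj I)) ≫ φ₂ I I ≫ F.map (lamC I) = lamD (F.obj I)) :
    (∀ X : C,
        N.h φ₀ (𝟙 (F.obj X)) ≫ φ₂ I X ≫ F.map (lamC X) = lamD (F.obj X)) ∧
      (∀ X : C,
        N.h (𝟙 (F.obj X)) φ₀ ≫ φ₂ X I ≫ F.map (rhoC X) = rhoD (F.obj X)) := by
  -- Step E1 : tensoring the unit comparison with an object on the right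
  have E1 : ∀ X : C,
      N.h (N.h φ₀ (𝟙 (F.obj I)) ≫ φ₂ I I ≫ F.map (lamC I)) (𝟙 (F.obj X)) ≫ φ₂ I X =
      eqToHom (N.assoc J (F.obj I) (F.obj X)) ≫ N.h (𝟙 J) (φ₂ I X) ≫
        N.h φ₀ (𝟙 (F.obj (M.t I X))) ≫ φ₂ I (M.t I X) ≫ F.map (lamC (M.t I X)) := by
    intro X
    have hA := N.h_assoc φ₀ (𝟙 (F.obj I)) (𝟙 (F.obj X))
    rw [N.h_id] at hA
    have t1 : N.h (F.map (lamC I)) (𝟙 (F.obj X)) ≫ φ₂ I X =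
        φ₂ (M.t I I) X ≫ eqToHom (congrArg F.obj (M.assoc I I X)) ≫
          F.map (lamC (M.t I X)) := by
      have h1 := φ₂nat (lamC I) (𝟙 X)
      rw [F.map_id] at h1
      rw [h1, hI.ax2 I X, F.map_comp, eqToHom_map]
    rw [h_comp_right, h_comp_right, Category.assoc, Category.assoc, t1,
      reassoc_of% (φ₂assoc I I X), hA]
    simp only [Category.assoc, eqToHom_trans, eqToHom_trans_assoc, eqToHom_refl, Category.comp_id,
      Category.id_comp]
    rw [h_exch_assoc]
  -- Step L2 : left compatibility for objects of the form I ⊗ X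
  have L2 : ∀ X : C,
      N.h φ₀ (𝟙 (F.obj (M.t I X))) ≫ φ₂ I (M.t I X) ≫ F.map (lamC (M.t I X)) =
        lamD (F.obj (M.t I X)) := by
    intro X
    have e1 := E1 X
    rw [hP, hJ.ax2 (F.obj I) (F.obj X), Category.assoc,
      ← hJ.lam_nat (φ₂ I X)] at e1
    haveI : IsIso (N.h (𝟙 J) (φ₂ I X)) := h_isIso N _ _ inferInstance (φ₂iso I X)
    have e2 := (cancel_epi (eqToHom (N.assoc J (F.obj I) (F.obj X)))).1 e1
    exact ((cancel_epi (N.h (𝟙 J) (φ₂ I X))).1 e2).symm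
  -- naturality of the comparison family
  have unat : ∀ {X Y : C} (f : X ⟶ Y),
      N.h (𝟙 J) (F.map f) ≫ N.h φ₀ (𝟙 (F.obj Y)) ≫ φ₂ I Y ≫ F.map (lamC Y) =
      N.h φ₀ (𝟙 (F.obj X)) ≫ φ₂ I X ≫ F.map (lamC X) ≫ F.map f := by
    intro X Y f
    rw [← h_exch_assoc N φ₀ (F.map f) (φ₂ I Y ≫ F.map (lamC Y))]
    have h1 := φ₂nat (𝟙 I) f
    rw [F.map_id] at h1
    rw [reassoc_of% h1, ← F.map_comp, hI.lam_nat f, F.map_comp]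
  -- full left compatibility
  have left : ∀ X : C,
      N.h φ₀ (𝟙 (F.obj X)) ≫ φ₂ I X ≫ F.map (lamC X) = lamD (F.obj X) := by
    intro X
    haveI := hI.lam_iso X
    haveI : IsIso (N.h (𝟙 J) (F.map (lamC X))) :=
      h_isIso N _ _ inferInstance inferInstance
    have e := unat (lamC X)
    rw [reassoc_of% (L2 X), ← hJ.lam_nat (F.map (lamC X))] at e
    exact (cancel_epi (N.h (𝟙 J) (F.map (lamC X)))).1 e
  refine ⟨left, ?_⟩
  -- Step K1 : tensoring the unit comparison with an object on the left
  have K1 : ∀ X : C,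
      N.h (𝟙 (F.obj X)) (N.h φ₀ (𝟙 (F.obj I)) ≫ φ₂ I I ≫ F.map (lamC I)) ≫ φ₂ X I =
      eqToHom (N.assoc (F.obj X) J (F.obj I)).symm ≫
        N.h (N.h (𝟙 (F.obj X)) φ₀ ≫ φ₂ X I ≫ F.map (rhoC X)) (𝟙 (F.obj I)) ≫
          φ₂ X I := by
    intro X
    have t1 : N.h (𝟙 (F.obj X)) (F.map (lamC I)) ≫ φ₂ X I =
        φ₂ X (M.t I I) ≫ eqToHom (congrArg F.obj (M.assoc X I I).symm) ≫
          F.map (M.h (rhoC X) (𝟙 I)) := by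
      have h1 := φ₂nat (𝟙 X) (lamC I)
      rw [F.map_id] at h1
      rw [h1, hI.ax4 X I, F.map_comp, eqToHom_map]
    have t3 : N.h (𝟙 (F.obj X)) (N.h φ₀ (𝟙 (F.obj I))) =
        eqToHom (N.assoc (F.obj X) J (F.obj I)).symm ≫
          N.h (N.h (𝟙 (F.obj X)) φ₀) (𝟙 (F.obj I)) ≫
          eqToHom (N.assoc (F.obj X) (F.obj I) (F.obj I)) := by
      rw [N.h_assoc (𝟙 (F.obj X)) φ₀ (𝟙 (F.obj I))]
      simp
    have t4 : φ₂ (M.t X I) I ≫ F.map (M.h (rhoC X) (𝟙 I)) =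
        N.h (F.map (rhoC X)) (𝟙 (F.obj I)) ≫ φ₂ X I := by
      have h1 := φ₂nat (rhoC X) (𝟙 I)
      rw [F.map_id] at h1
      exact h1.symm
    have t2 : N.h (𝟙 (F.obj X)) (φ₂ I I) ≫ φ₂ X (M.t I I) =
        eqToHom (N.assoc (F.obj X) (F.obj I) (F.obj I)).symm ≫
          N.h (φ₂ X I) (𝟙 (F.obj I)) ≫ φ₂ (M.t X I) I ≫
          eqToHom (congrArg F.obj (M.assoc X I I)) := by
      rw [reassoc_of% (φ₂assoc X I I)]
      simp
    rw [h_comp_left, h_comp_left, Category.assoc, Category.assoc, t1,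
      reassoc_of% t2, t3]
    simp only [Category.assoc, eqToHom_trans, eqToHom_trans_assoc, eqToHom_refl, Category.comp_id,
      Category.id_comp]
    rw [t4, h_comp_right, h_comp_right]
    simp only [Category.assoc]
  -- full right compatibility
  intro X
  have e := K1 X
  rw [hP, hJ.ax4 (F.obj X) (F.obj I), Category.assoc] at e
  have e2 := (cancel_epi (eqToHom (N.assoc (F.obj X) J (F.obj I)).symm)).1 e
  haveI := φ₂iso X I
  have e3 := (cancel_mono (φ₂ X I)).1 (by simpa only [Category.assoc] using e2)
  have e4 : N.h (N.h (𝟙 (F.obj X)) φ₀ ≫ φ₂ X I ≫ F.map (rhoC X)) φ₀ =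
      N.h (rhoD (F.obj X)) φ₀ := by
    calc N.h (N.h (𝟙 (F.obj X)) φ₀ ≫ φ₂ X I ≫ F.map (rhoC X)) φ₀
        = N.h (𝟙 (N.t (F.obj X) J)) φ₀ ≫
            N.h (N.h (𝟙 (F.obj X)) φ₀ ≫ φ₂ X I ≫ F.map (rhoC X)) (𝟙 (F.obj I)) := by
          rw [← N.h_comp]; simp
      _ = N.h (𝟙 (N.t (F.obj X) J)) φ₀ ≫ N.h (rhoD (F.obj X)) (𝟙 (F.obj I)) := by
          rw [e3]
      _ = N.h (rhoD (F.obj X)) φ₀ := by rw [← N.h_comp]; simp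
  have e5 : N.h (N.h (𝟙 (F.obj X)) φ₀ ≫ φ₂ X I ≫ F.map (rhoC X)) (𝟙 J) =
      N.h (rhoD (F.obj X)) (𝟙 J) := by
    haveI : IsIso (N.h (𝟙 (F.obj X)) φ₀) := h_isIso N _ _ inferInstance hφ₀
    apply (cancel_mono (N.h (𝟙 (F.obj X)) φ₀)).1
    rw [← N.h_comp, ← N.h_comp]
    simpa using e4
  exact rho_cancel hJ e5

/-- For a strong multiplicative functor `F` with coherence `φ₂`, an isomorphism
`φ₀ : J → F(I)` is an LR unit compatibility iff it is a semi-monoid homomorphism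
with respect to `β = λ^J_J` and `F(α) ∘ φ₂` (where `α = λ^I_I`); moreover left
compatibility for the single object `X = I` already implies full compatibility. -/
theorem stmt18 {C : Type u} [Category.{v} C] {D : Type u'} [Category.{v'} D]
    (M : SemiMonoidal C) (N : SemiMonoidal D) (F : C ⥤ D)
    (φ₂ : ∀ X Y : C, N.t (F.obj X) (F.obj Y) ⟶ F.obj (M.t X Y))
    (φ₂iso : ∀ X Y : C, IsIso (φ₂ X Y))
    (φ₂nat : ∀ {X₁ X₂ Y₁ Y₂ : C} (f : X₁ ⟶ X₂) (g : Y₁ ⟶ Y₂),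
      N.h (F.map f) (F.map g) ≫ φ₂ X₂ Y₂ = φ₂ X₁ Y₁ ≫ F.map (M.h f g))
    (φ₂assoc : ∀ X Y Z : C,
      N.h (φ₂ X Y) (𝟙 (F.obj Z)) ≫ φ₂ (M.t X Y) Z =
        eqToHom (N.assoc (F.obj X) (F.obj Y) (F.obj Z)) ≫
          N.h (𝟙 (F.obj X)) (φ₂ Y Z) ≫ φ₂ X (M.t Y Z) ≫
            eqToHom (congrArg F.obj (M.assoc X Y Z)).symm)
    (I : C) (lamC : ∀ X : C, M.t I X ⟶ X) (rhoC : ∀ X : C, M.t X I ⟶ X)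
    (hI : IsLRUnit M I lamC rhoC)
    (J : D) (lamD : ∀ X : D, N.t J X ⟶ X) (rhoD : ∀ X : D, N.t X J ⟶ X)
    (hJ : IsLRUnit N J lamD rhoD)
    (φ₀ : J ⟶ F.obj I) (hφ₀ : IsIso φ₀) :
    (((∀ X : C,
        N.h φ₀ (𝟙 (F.obj X)) ≫ φ₂ I X ≫ F.map (lamC X) = lamD (F.obj X)) ∧
      (∀ X : C,
        N.h (𝟙 (F.obj X)) φ₀ ≫ φ₂ X I ≫ F.map (rhoC X) = rhoD (F.obj X))) ↔
      N.h φ₀ φ₀ ≫ φ₂ I I ≫ F.map (lamC I) = lamD J ≫ φ₀) ∧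
    ((N.h φ₀ (𝟙 (F.obj I)) ≫ φ₂ I I ≫ F.map (lamC I) = lamD (F.obj I)) →
      ((∀ X : C,
        N.h φ₀ (𝟙 (F.obj X)) ≫ φ₂ I X ≫ F.map (lamC X) = lamD (F.obj X)) ∧
      (∀ X : C,
        N.h (𝟙 (F.obj X)) φ₀ ≫ φ₂ X I ≫ F.map (rhoC X) = rhoD (F.obj X)))) := by
  have key := stmt18_key M N F φ₂ φ₂iso φ₂nat φ₂assoc I lamC rhoC hI J lamD rhoD hJ φ₀ hφ₀
  have hsplit : N.h φ₀ φ₀ = N.h (𝟙 J) φ₀ ≫ N.h φ₀ (𝟙 (F.obj I)) := by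
    rw [← N.h_comp]; simp
  refine ⟨⟨?_, fun hh => key ?_⟩, key⟩
  · rintro ⟨hl, -⟩
    calc N.h φ₀ φ₀ ≫ φ₂ I I ≫ F.map (lamC I)
        = N.h (𝟙 J) φ₀ ≫ N.h φ₀ (𝟙 (F.obj I)) ≫ φ₂ I I ≫ F.map (lamC I) := by
          rw [hsplit, Category.assoc]
      _ = N.h (𝟙 J) φ₀ ≫ lamD (F.obj I) := by rw [hl I]
      _ = lamD J ≫ φ₀ := hJ.lam_nat φ₀
  ·
    have e : N.h (𝟙 J) φ₀ ≫ N.h φ₀ (𝟙 (F.obj I)) ≫ φ₂ I I ≫ F.map (lamC I) =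
        N.h (𝟙 J) φ₀ ≫ lamD (F.obj I) := by
      rw [hJ.lam_nat φ₀, ← hh, hsplit, Category.assoc]
    haveI : IsIso (N.h (𝟙 J) φ₀) := h_isIso N _ _ inferInstance hφ₀
    exact (cancel_epi (N.h (𝟙 J) φ₀)).1 e
end

section
/- A strong multiplicative functor between monoidal categories admits at most one unit compatibility: if φ_0, φ_0' : J → F(I) are both semi-monoid isomorphisms with respect to β and F(α) ∘ φ_2, then φ_0 = φ_0'. Moreover, such a compatibility exists if and only if (F(I), F(α) ∘ φ_2) is a Saavedra unit in D; hence a strong multiplicative functor is monoidal if and only if the image of a unit is again a unit. -/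
open CategoryTheory

universe v u v' u'

variable {C : Type u} [Category.{v} C]

namespace SemiMonoidalAux

variable {D : Type u'} [Category.{v'} D] (N : SemiMonoidal D)

lemma hl_comp (Z : D) {X Y W : D} (a : X ⟶ Y) (b : Y ⟶ W) :
    N.h (𝟙 Z) (a ≫ b) = N.h (𝟙 Z) a ≫ N.h (𝟙 Z) b := by
  simpa using N.h_comp (𝟙 Z) (𝟙 Z) a b

lemma hr_comp (Z : D) {X Y W : D} (a : X ⟶ Y) (b : Y ⟶ W) :
    N.h (a ≫ b) (𝟙 Z) = N.h a (𝟙 Z) ≫ N.h b (𝟙 Z) := by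
  simpa using N.h_comp a b (𝟙 Z) (𝟙 Z)

lemma h_split {X X' Y Y' : D} (f : X ⟶ X') (g : Y ⟶ Y') :
    N.h f g = N.h (𝟙 X) g ≫ N.h f (𝟙 Y') := by
  simpa using N.h_comp (𝟙 X) f g (𝟙 Y')

lemma h_split' {X X' Y Y' : D} (f : X ⟶ X') (g : Y ⟶ Y') :
    N.h f g = N.h f (𝟙 Y) ≫ N.h (𝟙 X') g := by
  simpa using N.h_comp f (𝟙 X') (𝟙 Y) g

lemma h_eq_id {X X' Y : D} (p : X = X') :
    N.h (eqToHom p) (𝟙 Y) = eqToHom (by rw [p]) := by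
  subst p; simp [N.h_id]

lemma h_id_eq {X Y Y' : D} (p : Y = Y') :
    N.h (𝟙 X) (eqToHom p) = eqToHom (by rw [p]) := by
  subst p; simp [N.h_id]

lemma eqToHom_self {X : D} (p : X = X) : eqToHom p = 𝟙 X := by
  simp

lemma isIso_h {X X' Y Y' : D} (f : X ⟶ X') (g : Y ⟶ Y') [IsIso f] [IsIso g] :
    IsIso (N.h f g) :=
  ⟨⟨N.h (inv f) (inv g),
    by rw [← N.h_comp, IsIso.hom_inv_id, IsIso.hom_inv_id, N.h_id],
    by rw [← N.h_comp, IsIso.inv_hom_id, IsIso.inv_hom_id, N.h_id]⟩⟩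

lemma isIso_of_hl {J : D}
    (ffL : ∀ X Y : D, Function.Bijective fun f : X ⟶ Y => N.h (𝟙 J) f)
    {X Y : D} (f : X ⟶ Y) (hf : IsIso (N.h (𝟙 J) f)) : IsIso f := by
  obtain ⟨g, hg⟩ := (ffL Y X).surjective (inv (N.h (𝟙 J) f))
  simp only at hg
  refine ⟨g, ?_, ?_⟩
  · apply (ffL X X).injective
    simp only [hl_comp, hg, N.h_id, IsIso.hom_inv_id]
  · apply (ffL Y Y).injective
    simp only [hl_comp, hg, N.h_id, IsIso.inv_hom_id]

lemma isIso_of_hr {A : D}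
    (ffR : ∀ X Y : D, Function.Bijective fun f : X ⟶ Y => N.h f (𝟙 A))
    {X Y : D} (f : X ⟶ Y) (hf : IsIso (N.h f (𝟙 A))) : IsIso f := by
  obtain ⟨g, hg⟩ := (ffR Y X).surjective (inv (N.h f (𝟙 A)))
  simp only at hg
  refine ⟨g, ?_, ?_⟩
  · apply (ffR X X).injective
    simp only [hr_comp, hg, N.h_id, IsIso.hom_inv_id]
  · apply (ffR Y Y).injective
    simp only [hr_comp, hg, N.h_id, IsIso.inv_hom_id]


section Lam

variable (J : D) (β : N.t J J ⟶ J)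
variable (ffL : ∀ X Y : D, Function.Bijective fun f : X ⟶ Y => N.h (𝟙 J) f)
variable (ffR : ∀ X Y : D, Function.Bijective fun f : X ⟶ Y => N.h f (𝟙 J))

noncomputable def lam (X : D) : N.t J X ⟶ X :=
  Function.surjInv (ffL (N.t J X) X).surjective
    (eqToHom (N.assoc J J X).symm ≫ N.h β (𝟙 X))

lemma lam_spec (X : D) :
    N.h (𝟙 J) (lam N J β ffL X) = eqToHom (N.assoc J J X).symm ≫ N.h β (𝟙 X) :=
  Function.surjInv_eq (ffL (N.t J X) X).surjective _

lemma lam_iso (hβ : IsIso β) (X : D) : IsIso (lam N J β ffL X) := by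
  haveI := hβ
  apply isIso_of_hl N ffL
  rw [lam_spec]
  haveI := isIso_h N β (𝟙 X)
  infer_instance

lemma lam_nat {X Y : D} (f : X ⟶ Y) :
    lam N J β ffL X ≫ f = N.h (𝟙 J) f ≫ lam N J β ffL Y := by
  apply (ffL (N.t J X) Y).injective
  simp only
  rw [hl_comp, hl_comp, lam_spec, lam_spec]
  have h1 : N.h β (𝟙 X) ≫ N.h (𝟙 J) f = N.h β f := by
    simpa using (N.h_comp β (𝟙 J) (𝟙 X) f).symm
  have h2 : N.h (𝟙 (N.t J J)) f ≫ N.h β (𝟙 Y) = N.h β f := by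
    simpa using (N.h_comp (𝟙 (N.t J J)) β f (𝟙 Y)).symm
  have h3 : N.h (𝟙 J) (N.h (𝟙 J) f) =
      eqToHom (N.assoc J J X).symm ≫ N.h (𝟙 (N.t J J)) f ≫ eqToHom (N.assoc J J Y) := by
    have h4 := N.h_assoc (𝟙 J) (𝟙 J) f
    rw [N.h_id] at h4
    rw [h4]
    simp
  rw [h3]
  simp [h1, h2]


lemma lam_tJ (hβ : IsIso β) (X : D) :
    lam N J β ffL (N.t J X) = N.h (𝟙 J) (lam N J β ffL X) := by
  haveI : IsIso (lam N J β ffL X) := lam_iso N J β ffL hβ X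
  have h1 := lam_nat N J β ffL (lam N J β ffL X)
  exact (cancel_mono (lam N J β ffL X)).mp h1

lemma lam_t (X Y : D) :
    lam N J β ffL (N.t X Y) =
      eqToHom (N.assoc J X Y).symm ≫ N.h (lam N J β ffL X) (𝟙 Y) := by
  apply (ffL (N.t J (N.t X Y)) (N.t X Y)).injective
  simp only
  rw [lam_spec, hl_comp, h_id_eq]
  have h1 : N.h (𝟙 J) (N.h (lam N J β ffL X) (𝟙 Y)) =
      eqToHom (N.assoc J (N.t J X) Y).symm ≫
        N.h (N.h (𝟙 J) (lam N J β ffL X)) (𝟙 Y) ≫ eqToHom (N.assoc J X Y) := by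
    rw [N.h_assoc (𝟙 J) (lam N J β ffL X) (𝟙 Y)]
    simp
  rw [h1, lam_spec, hr_comp, h_eq_id]
  have h2 : N.h (N.h β (𝟙 X)) (𝟙 Y) =
      eqToHom (N.assoc (N.t J J) X Y) ≫ N.h β (𝟙 (N.t X Y)) ≫
        eqToHom (N.assoc J X Y).symm := by
    have h3 := N.h_assoc β (𝟙 X) (𝟙 Y)
    rw [N.h_id] at h3
    exact h3
  rw [h2]
  simp

include ffL ffR in
lemma lam_J (hβ : IsIso β) : lam N J β ffL J = β := by
  apply (ffR (N.t J J) J).injective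
  simp only
  have h5 := lam_t N J β ffL J J
  rw [lam_tJ N J β ffL hβ J, lam_spec] at h5
  exact ((cancel_epi (eqToHom (N.assoc J J J).symm)).mp h5).symm

include ffL ffR in
lemma h_id_beta (hβ : IsIso β) :
    N.h (𝟙 J) β = eqToHom (N.assoc J J J).symm ≫ N.h β (𝟙 J) := by
  conv_lhs => rw [← lam_J N J β ffL ffR hβ]
  rw [lam_spec]

include ffL ffR in
lemma unit_auto (hβ : IsIso β) (θ : J ⟶ J) (hθ : IsIso θ)
    (hc : N.h θ θ ≫ β = β ≫ θ) : θ = 𝟙 J := by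
  haveI := hβ; haveI := hθ
  have key : N.h (N.h (𝟙 J) θ ≫ β) θ = N.h β θ := by
    have h1 := congrArg (fun x => N.h (𝟙 J) x) hc
    simp only [hl_comp] at h1
    rw [h_id_beta N J β ffL ffR hβ] at h1
    have hA : N.h (𝟙 J) (N.h θ θ) =
        eqToHom (N.assoc J J J).symm ≫ N.h (N.h (𝟙 J) θ) θ ≫
          eqToHom (N.assoc J J J) := by
      rw [N.h_assoc (𝟙 J) θ θ]; simp
    rw [hA] at h1
    simp only [Category.assoc, eqToHom_trans, eqToHom_trans_assoc, eqToHom_self, eqToHom_refl,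
      Category.comp_id, Category.id_comp] at h1
    have h2 := (cancel_epi (eqToHom (N.assoc J J J).symm)).mp h1
    -- h2 : h (h𝟙θ) θ ≫ h β 𝟙J = h β 𝟙J ≫ h 𝟙J θ
    have h3 : N.h (N.h (𝟙 J) θ) θ ≫ N.h β (𝟙 J) = N.h (N.h (𝟙 J) θ ≫ β) θ := by
      simpa using (N.h_comp (N.h (𝟙 J) θ) β θ (𝟙 J)).symm
    have h4 : N.h β (𝟙 J) ≫ N.h (𝟙 J) θ = N.h β θ := by
      simpa using (N.h_comp β (𝟙 J) (𝟙 J) θ).symm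
    rw [h3, h4] at h2
    exact h2
  rw [h_split' N (N.h (𝟙 J) θ ≫ β) θ, h_split' N β θ] at key
  haveI : IsIso (N.h (𝟙 J) θ) := isIso_h N (𝟙 J) θ
  have h5 := (cancel_mono (N.h (𝟙 J) θ)).mp key
  have h6 := (ffR (N.t J J) J).injective h5
  -- h6 : h 𝟙 θ ≫ β = β
  have h7 : N.h (𝟙 J) θ = 𝟙 (N.t J J) := by
    have := h6
    rw [← Category.id_comp β] at this
    exact (cancel_mono β).mp ((by simpa using this) : N.h (𝟙 J) θ ≫ β = 𝟙 _ ≫ β)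
  apply (ffL J J).injective
  simp only [h7, N.h_id]

end Lam

section Rho

variable (A : D) (μ : N.t A A ⟶ A)
variable (ffAR : ∀ X Y : D, Function.Bijective fun f : X ⟶ Y => N.h f (𝟙 A))

noncomputable def rho (X : D) : N.t X A ⟶ X :=
  Function.surjInv (ffAR (N.t X A) X).surjective
    (eqToHom (N.assoc X A A) ≫ N.h (𝟙 X) μ)

lemma rho_spec (X : D) :
    N.h (rho N A μ ffAR X) (𝟙 A) = eqToHom (N.assoc X A A) ≫ N.h (𝟙 X) μ :=
  Function.surjInv_eq (ffAR (N.t X A) X).surjective _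

lemma rho_iso (hμ : IsIso μ) (X : D) : IsIso (rho N A μ ffAR X) := by
  haveI := hμ
  apply isIso_of_hr N ffAR
  rw [rho_spec]
  haveI := isIso_h N (𝟙 X) μ
  infer_instance

end Rho

section Mixed

variable (J : D) (β : N.t J J ⟶ J) (A : D) (μ : N.t A A ⟶ A)
variable (ffL : ∀ X Y : D, Function.Bijective fun f : X ⟶ Y => N.h (𝟙 J) f)
variable (ffAR : ∀ X Y : D, Function.Bijective fun f : X ⟶ Y => N.h f (𝟙 A))

lemma mixed :
    N.h (rho N A μ ffAR J) (𝟙 A) ≫ lam N J β ffL A =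
      N.h (lam N J β ffL A) (𝟙 A) ≫ μ := by
  apply (ffL (N.t (N.t J A) A) A).injective
  simp only
  rw [hl_comp, hl_comp, rho_spec, lam_spec, hl_comp, h_id_eq]
  -- LHS now: eqToHom ≫ h 𝟙J (h 𝟙J μ) ≫ eqToHom(assoc J J A).symm ≫ h β 𝟙A
  have hL : N.h (𝟙 J) (N.h (𝟙 J) μ) =
      eqToHom (N.assoc J J (N.t A A)).symm ≫ N.h (𝟙 (N.t J J)) μ ≫
        eqToHom (N.assoc J J A) := by
    have h4 := N.h_assoc (𝟙 J) (𝟙 J) μ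
    rw [N.h_id] at h4
    rw [h4]; simp
  have m1 : N.h (𝟙 (N.t J J)) μ ≫ N.h β (𝟙 A) = N.h β μ := by
    simpa using (N.h_comp (𝟙 (N.t J J)) β μ (𝟙 A)).symm
  rw [hL]
  -- RHS: h 𝟙J (h (lam A) 𝟙A) ≫ h 𝟙J μ
  have hR : N.h (𝟙 J) (N.h (lam N J β ffL A) (𝟙 A)) =
      eqToHom (N.assoc J (N.t J A) A).symm ≫
        N.h (N.h (𝟙 J) (lam N J β ffL A)) (𝟙 A) ≫ eqToHom (N.assoc J A A) := by
    rw [N.h_assoc (𝟙 J) (lam N J β ffL A) (𝟙 A)]; simp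
  have hB : N.h (N.h β (𝟙 A)) (𝟙 A) =
      eqToHom (N.assoc (N.t J J) A A) ≫ N.h β (𝟙 (N.t A A)) ≫
        eqToHom (N.assoc J A A).symm := by
    have h5 := N.h_assoc β (𝟙 A) (𝟙 A)
    rw [N.h_id] at h5
    exact h5
  have m2 : N.h β (𝟙 (N.t A A)) ≫ N.h (𝟙 J) μ = N.h β μ := by
    simpa using (N.h_comp β (𝟙 J) (𝟙 (N.t A A)) μ).symm
  rw [hR, lam_spec, hr_comp, h_eq_id, hB]
  simp only [Category.assoc, eqToHom_trans, eqToHom_trans_assoc, eqToHom_self,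
    eqToHom_refl, Category.comp_id, Category.id_comp, m1, m2]

end Mixed
end SemiMonoidalAux


open SemiMonoidalAux

/-- A strong multiplicative functor admits at most one unit compatibility, and it
admits one iff the image `(F(I), F(α) ∘ φ₂)` of the unit is again a Saavedra unit
(the pseudo-idempotent structure being automatically an isomorphism, this means
`F(I)` is cancellable): a multiplicative functor is monoidal iff the image of a
unit is again a unit. -/
theorem stmt19 {C : Type u} [Category.{v} C] {D : Type u'} [Category.{v'} D]
    (M : SemiMonoidal C) (N : SemiMonoidal D) (F : C ⥤ D)
    (φ₂ : ∀ X Y : C, N.t (F.obj X) (F.obj Y) ⟶ F.obj (M.t X Y))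
    (φ₂iso : ∀ X Y : C, IsIso (φ₂ X Y))
    (φ₂nat : ∀ {X₁ X₂ Y₁ Y₂ : C} (f : X₁ ⟶ X₂) (g : Y₁ ⟶ Y₂),
      N.h (F.map f) (F.map g) ≫ φ₂ X₂ Y₂ = φ₂ X₁ Y₁ ≫ F.map (M.h f g))
    (φ₂assoc : ∀ X Y Z : C,
      N.h (φ₂ X Y) (𝟙 (F.obj Z)) ≫ φ₂ (M.t X Y) Z =
        eqToHom (N.assoc (F.obj X) (F.obj Y) (F.obj Z)) ≫
          N.h (𝟙 (F.obj X)) (φ₂ Y Z) ≫ φ₂ X (M.t Y Z) ≫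
            eqToHom (congrArg F.obj (M.assoc X Y Z)).symm)
    (I : C) (α : M.t I I ⟶ I) (hα : IsIso α)
    (ffIL : ∀ X Y : C, Function.Bijective fun f : X ⟶ Y => M.h (𝟙 I) f)
    (ffIR : ∀ X Y : C, Function.Bijective fun f : X ⟶ Y => M.h f (𝟙 I))
    (J : D) (β : N.t J J ⟶ J) (hβ : IsIso β)
    (ffJL : ∀ X Y : D, Function.Bijective fun f : X ⟶ Y => N.h (𝟙 J) f)
    (ffJR : ∀ X Y : D, Function.Bijective fun f : X ⟶ Y => N.h f (𝟙 J)) :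
    (∀ φ₀ φ₀' : J ⟶ F.obj I, IsIso φ₀ → IsIso φ₀' →
      N.h φ₀ φ₀ ≫ φ₂ I I ≫ F.map α = β ≫ φ₀ →
      N.h φ₀' φ₀' ≫ φ₂ I I ≫ F.map α = β ≫ φ₀' → φ₀ = φ₀') ∧
    ((∃ φ₀ : J ⟶ F.obj I, IsIso φ₀ ∧
        N.h φ₀ φ₀ ≫ φ₂ I I ≫ F.map α = β ≫ φ₀) ↔
      ((∀ X Y : D, Function.Bijective fun f : X ⟶ Y => N.h (𝟙 (F.obj I)) f) ∧
       (∀ X Y : D, Function.Bijective fun f : X ⟶ Y => N.h f (𝟙 (F.obj I))))) := by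
  haveI := hβ
  constructor
  · -- uniqueness
    intro φ φ' hφ hφ' hcφ hcφ'
    haveI := hφ; haveI := hφ'
    have hcφr := reassoc_of% hcφ
    have hcφ'r := reassoc_of% hcφ'
    have hinv : N.h (inv φ) (inv φ) ≫ β = (φ₂ I I ≫ F.map α) ≫ inv φ := by
      haveI : IsIso (N.h φ φ) := isIso_h N φ φ
      rw [← cancel_epi (N.h φ φ), ← Category.assoc, ← N.h_comp]
      simp only [IsIso.hom_inv_id, N.h_id, Category.id_comp, Category.assoc]
      rw [hcφr]
      simp
    have hθ : N.h (φ' ≫ inv φ) (φ' ≫ inv φ) ≫ β = β ≫ (φ' ≫ inv φ) := by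
      rw [N.h_comp, Category.assoc, hinv]
      simp only [Category.assoc]
      rw [hcφ'r]
    haveI : IsIso (φ' ≫ inv φ) := inferInstance
    have h8 := unit_auto N J β ffJL ffJR hβ (φ' ≫ inv φ) this hθ
    calc φ = (φ' ≫ inv φ) ≫ φ := by rw [h8]; simp
    _ = φ' := by simp
  constructor
  · -- existence gives cancellability of F(I)
    rintro ⟨φ₀, hiso, -⟩
    haveI := hiso
    constructor
    · intro X Y
      haveI : IsIso (N.h φ₀ (𝟙 X)) := isIso_h N φ₀ (𝟙 X)
      haveI : IsIso (N.h φ₀ (𝟙 Y)) := isIso_h N φ₀ (𝟙 Y)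
      have key : (fun f : X ⟶ Y => N.h (𝟙 (F.obj I)) f) =
          (fun g : N.t J X ⟶ N.t J Y => inv (N.h φ₀ (𝟙 X)) ≫ g ≫ N.h φ₀ (𝟙 Y)) ∘
            (fun f : X ⟶ Y => N.h (𝟙 J) f) := by
        funext f
        have h1 : N.h φ₀ (𝟙 X) ≫ N.h (𝟙 (F.obj I)) f = N.h (𝟙 J) f ≫ N.h φ₀ (𝟙 Y) := by
          rw [← N.h_comp, ← N.h_comp]; simp
        simp only [Function.comp_apply]
        rw [← h1]
        simp
      rw [key]
      refine Function.Bijective.comp ⟨?_, ?_⟩ (ffJL X Y)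
      · intro a b hab
        simp only at hab
        have h2 : a ≫ N.h φ₀ (𝟙 Y) = b ≫ N.h φ₀ (𝟙 Y) := by
          have := congrArg (fun z => N.h φ₀ (𝟙 X) ≫ z) hab
          simpa using this
        exact (cancel_mono _).mp h2
      · intro g
        exact ⟨N.h φ₀ (𝟙 X) ≫ g ≫ inv (N.h φ₀ (𝟙 Y)), by simp⟩
    · intro X Y
      haveI : IsIso (N.h (𝟙 X) φ₀) := isIso_h N (𝟙 X) φ₀
      haveI : IsIso (N.h (𝟙 Y) φ₀) := isIso_h N (𝟙 Y) φ₀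
      have key : (fun f : X ⟶ Y => N.h f (𝟙 (F.obj I))) =
          (fun g : N.t X J ⟶ N.t Y J => inv (N.h (𝟙 X) φ₀) ≫ g ≫ N.h (𝟙 Y) φ₀) ∘
            (fun f : X ⟶ Y => N.h f (𝟙 J)) := by
        funext f
        have h1 : N.h (𝟙 X) φ₀ ≫ N.h f (𝟙 (F.obj I)) = N.h f (𝟙 J) ≫ N.h (𝟙 Y) φ₀ := by
          rw [← N.h_comp, ← N.h_comp]; simp
        simp only [Function.comp_apply]
        rw [← h1]
        simp
      rw [key]
      refine Function.Bijective.comp ⟨?_, ?_⟩ (ffJR X Y)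
      · intro a b hab
        simp only at hab
        have h2 : a ≫ N.h (𝟙 Y) φ₀ = b ≫ N.h (𝟙 Y) φ₀ := by
          have := congrArg (fun z => N.h (𝟙 X) φ₀ ≫ z) hab
          simpa using this
        exact (cancel_mono _).mp h2
      · intro g
        exact ⟨N.h (𝟙 X) φ₀ ≫ g ≫ inv (N.h (𝟙 Y) φ₀), by simp⟩
  · -- cancellability of F(I) gives a unit compatibility
    rintro ⟨ffAL, ffAR⟩
    haveI := hα
    haveI := φ₂iso I I
    have hμ : IsIso (φ₂ I I ≫ F.map α) := inferInstance
    haveI hri : IsIso (rho N (F.obj I) (φ₂ I I ≫ F.map α) ffAR J) :=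
      rho_iso N (F.obj I) (φ₂ I I ≫ F.map α) ffAR hμ J
    haveI hli : IsIso (lam N J β ffJL (F.obj I)) := lam_iso N J β ffJL hβ (F.obj I)
    refine ⟨inv (rho N (F.obj I) (φ₂ I I ≫ F.map α) ffAR J) ≫ lam N J β ffJL (F.obj I),
      inferInstance, ?_⟩
    haveI : IsIso (N.h (rho N (F.obj I) (φ₂ I I ≫ F.map α) ffAR J)
        (rho N (F.obj I) (φ₂ I I ≫ F.map α) ffAR J)) := isIso_h N _ _
    have T1 : N.h (rho N (F.obj I) (φ₂ I I ≫ F.map α) ffAR J)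
          (rho N (F.obj I) (φ₂ I I ≫ F.map α) ffAR J) ≫
        N.h (inv (rho N (F.obj I) (φ₂ I I ≫ F.map α) ffAR J) ≫ lam N J β ffJL (F.obj I))
          (inv (rho N (F.obj I) (φ₂ I I ≫ F.map α) ffAR J) ≫ lam N J β ffJL (F.obj I)) =
        N.h (lam N J β ffJL (F.obj I)) (lam N J β ffJL (F.obj I)) := by
      rw [← N.h_comp]; simp
    have T5 : N.h (rho N (F.obj I) (φ₂ I I ≫ F.map α) ffAR J)
          (rho N (F.obj I) (φ₂ I I ≫ F.map α) ffAR J) ≫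
        N.h (𝟙 J) (inv (rho N (F.obj I) (φ₂ I I ≫ F.map α) ffAR J) ≫
          lam N J β ffJL (F.obj I)) =
        N.h (rho N (F.obj I) (φ₂ I I ≫ F.map α) ffAR J) (lam N J β ffJL (F.obj I)) := by
      rw [← N.h_comp]; simp
    have hβφ : β ≫ inv (rho N (F.obj I) (φ₂ I I ≫ F.map α) ffAR J) ≫
          lam N J β ffJL (F.obj I) =
        N.h (𝟙 J) (inv (rho N (F.obj I) (φ₂ I I ≫ F.map α) ffAR J) ≫
          lam N J β ffJL (F.obj I)) ≫ lam N J β ffJL (F.obj I) := by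
      have h9 := lam_nat N J β ffJL
        (inv (rho N (F.obj I) (φ₂ I I ≫ F.map α) ffAR J) ≫ lam N J β ffJL (F.obj I))
      rw [lam_J N J β ffJL ffJR hβ] at h9
      exact h9
    have main : N.h (lam N J β ffJL (F.obj I)) (lam N J β ffJL (F.obj I)) ≫
          (φ₂ I I ≫ F.map α) =
        N.h (rho N (F.obj I) (φ₂ I I ≫ F.map α) ffAR J) (lam N J β ffJL (F.obj I)) ≫
          lam N J β ffJL (F.obj I) := by
      rw [h_split N (lam N J β ffJL (F.obj I)) (lam N J β ffJL (F.obj I)),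
        h_split N (rho N (F.obj I) (φ₂ I I ≫ F.map α) ffAR J) (lam N J β ffJL (F.obj I)),
        Category.assoc, Category.assoc, mixed N J β (F.obj I) (φ₂ I I ≫ F.map α) ffJL ffAR]
    rw [← cancel_epi (N.h (rho N (F.obj I) (φ₂ I I ≫ F.map α) ffAR J)
        (rho N (F.obj I) (φ₂ I I ≫ F.map α) ffAR J)), hβφ, ← Category.assoc, T1]
    rw [show N.h (lam N J β ffJL (F.obj I)) (lam N J β ffJL (F.obj I)) ≫
          φ₂ I I ≫ F.map α =
        N.h (rho N (F.obj I) (φ₂ I I ≫ F.map α) ffAR J) (lam N J β ffJL (F.obj I)) ≫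
          lam N J β ffJL (F.obj I) from main]
    rw [← Category.assoc, T5]
end
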